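/- arXiv:1204.4577 — 10 statements merged into one kernel-verified Lean document; each statement's English description precedes it below -/
import Mathlib

section
/- For every i with 0 ≤ i ≤ m+n−1, the sorted elements of 𝔉(m,n) satisfy k_i + k_{m+n−1−i} = mn. -/
/-! The set `𝔉(m,n)` is invariant under the order-reversing involution `x ↦ mn - x`, since `m` and
`n` both divide `mn`. Reversing the order of a finite enumeration and applying an order-reversing
bijection of its range yields another increasing enumeration of the same set, and a finite subset
of a linear order has only one increasing enumeration. -/

open Set

theorem StrictMono.apply_rev_eq_of_strictAntiOn {α : Type*} [LinearOrder α] {N : ℕ}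
    {f : Fin N → α} {σ : α → α} (hf : StrictMono f) (hσ : StrictAntiOn σ (range f))
    (hmaps : MapsTo σ (range f) (range f)) (i : Fin N) : σ (f i.rev) = f i := by
  have himage : σ '' range f = range f :=
    (((finite_range f).injOn_iff_bijOn_of_mapsTo hmaps).1 hσ.injOn).image_eq
  have hmono : StrictMono (σ ∘ f ∘ Fin.rev) := fun i j hij =>
    hσ (mem_range_self _) (mem_range_self _) (hf (Fin.rev_lt_rev.2 hij))
  have hrange : range (σ ∘ f ∘ Fin.rev) = range f := by
    rw [range_comp, Fin.rev_surjective.range_comp, himage]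
  exact congrFun ((hmono.range_inj hf).1 hrange) i

theorem Nat.dvd_or_dvd_mul_sub {m n x : ℕ} (h : m ∣ x ∨ n ∣ x) :
    m ∣ m * n - x ∨ n ∣ m * n - x :=
  h.imp (Nat.dvd_sub (dvd_mul_right m n)) (Nat.dvd_sub (dvd_mul_left n m))

theorem sorted_elements_add_rev_general (m n : ℕ) (k : ℕ → ℕ)
    (hmono : ∀ i j : ℕ, i < j → j < m + n → k i < k j)
    (hmem : ∀ x : ℕ, ((m ∣ x ∨ n ∣ x) ∧ x ≤ m * n) ↔ ∃ i < m + n, k i = x) :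
    ∀ i < m + n, k i + k (m + n - 1 - i) = m * n := by
  intro i hi
  set f : Fin (m + n) → ℕ := fun i => k i
  have hrange : ∀ x, x ∈ range f ↔ (m ∣ x ∨ n ∣ x) ∧ x ≤ m * n := fun x => by
    rw [hmem]
    exact ⟨fun ⟨j, hj⟩ => ⟨j, j.2, hj⟩, fun ⟨j, hj, hkj⟩ => ⟨⟨j, hj⟩, hkj⟩⟩
  have hle : ∀ x ∈ range f, x ≤ m * n := fun x hx => ((hrange x).1 hx).2
  have hreflect := StrictMono.apply_rev_eq_of_strictAntiOn (σ := (m * n - ·))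
    (fun a b hab => hmono a b hab b.2)
    (fun x _ y hy hxy => show m * n - y < m * n - x by have := hle y hy; omega)
    (fun x hx => (hrange _).2 ⟨Nat.dvd_or_dvd_mul_sub ((hrange x).1 hx).1, Nat.sub_le _ _⟩)
    ⟨i, hi⟩
  have hle_rev := hle _ (mem_range_self (f := f) (Fin.rev ⟨i, hi⟩))
  simp only [f, Fin.val_rev] at hreflect hle_rev
  rw [Nat.sub_sub, Nat.add_comm 1 i]
  omega

/-- Let `m, n` be coprime with `2 ≤ m < n`, and let
`k 0 < k 1 < ⋯ < k (m+n-1)` be the increasing enumeration of the set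
`𝔉(m,n) = (mℤ ∪ nℤ) ∩ [0, mn]`.  Then `k i + k (m+n-1-i) = m*n` for all `i`. -/
theorem sorted_elements_add_rev (m n : ℕ) (hm : 2 ≤ m) (hmn : m < n)
    (hcop : Nat.Coprime m n) (k : ℕ → ℕ)
    (hmono : ∀ i j : ℕ, i < j → j < m + n → k i < k j)
    (hmem : ∀ x : ℕ, ((m ∣ x ∨ n ∣ x) ∧ x ≤ m * n) ↔ ∃ i < m + n, k i = x) :
    ∀ i < m + n, k i + k (m + n - 1 - i) = m * n :=
  sorted_elements_add_rev_general m n k hmono hmem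
end

section
/- One has u_0 = w_0 = 0, u_n = w_m = m+n−1, u_j = ⌊jm/n⌋ + j for 1 ≤ j ≤ n−1, and w_j = ⌊jn/m⌋ + j for 1 ≤ j ≤ m−1; both (u_j) and (w_j) are strictly increasing, and moreover u_j + u_{n−j} = m+n−1 for 0 ≤ j ≤ n and w_j + w_{m−j} = m+n−1 for 0 ≤ j ≤ m. -/
/-!
Because `k` enumerates `𝔉(m,n)` increasingly, the index of an element `t` is the number of
positive elements of `𝔉(m,n)` up to `t`. For `t = j * a` with `j < b` (where `{a, b} = {m, n}`),
coprimality makes the positive multiples of `a` and of `b` up to `t` disjoint, so the count is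
`j + ⌊j a / b⌋`. The symmetry follows from `⌊j a / b⌋ + ⌊(b - j) a / b⌋ = a - 1`, valid because
`j a / b` is not an integer for `0 < j < b`.
-/

open Finset

def multiplesUnion (a b : ℕ) : Finset ℕ := {x ∈ Iic (a * b) | a ∣ x ∨ b ∣ x}

theorem mem_multiplesUnion {a b x : ℕ} :
    x ∈ multiplesUnion a b ↔ (a ∣ x ∨ b ∣ x) ∧ x ≤ a * b := by
  rw [multiplesUnion, mem_filter, mem_Iic, and_comm]

theorem multiplesUnion_comm (a b : ℕ) : multiplesUnion a b = multiplesUnion b a := by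
  ext x
  simp only [mem_multiplesUnion, or_comm, mul_comm]

theorem card_filter_Ioc_dvd_or_dvd {a b j : ℕ} (ha : 0 < a) (hab : a.Coprime b) (hj : j < b) :
    #{x ∈ Ioc 0 (j * a) | a ∣ x ∨ b ∣ x} = j * a / b + j := by
  have hdisj : Disjoint {x ∈ Ioc 0 (j * a) | a ∣ x} {x ∈ Ioc 0 (j * a) | b ∣ x} := by
    refine disjoint_filter.mpr fun x hx hax hbx => ?_
    obtain ⟨hx₀, hxj⟩ := mem_Ioc.mp hx
    have hle : a * b ≤ x := Nat.le_of_dvd hx₀ (hab.mul_dvd_of_dvd_of_dvd hax hbx)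
    have hlt : j * a < b * a := Nat.mul_lt_mul_of_pos_right hj ha
    linarith
  rw [filter_or, card_union_of_disjoint hdisj, Nat.Ioc_filter_dvd_card_eq_div,
    Nat.Ioc_filter_dvd_card_eq_div, Nat.mul_div_cancel _ ha, add_comm]

theorem Nat.div_add_div_of_add_eq_mul {x y b c : ℕ} (h : x + y = b * c) (hx : ¬ b ∣ x) :
    x / b + y / b = c - 1 := by
  have hb : 0 < b := Nat.pos_of_ne_zero (by rintro rfl; simp_all)
  have hmod : b ≤ x % b + y % b := by
    have hx' : x % b ≠ 0 := fun h0 => hx (Nat.dvd_of_mod_eq_zero h0)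
    have hsum : (x % b + y % b) % b = 0 := by rw [← Nat.add_mod, h, Nat.mul_mod_right]
    exact Nat.le_of_dvd (by omega) (Nat.dvd_of_mod_eq_zero hsum)
  have hdiv := Nat.add_div_eq_of_le_mod_add_mod hmod hb
  rw [h, Nat.mul_div_cancel_left _ hb] at hdiv
  rw [hdiv, Nat.add_sub_cancel]

theorem StrictMonoOn.card_filter_image_Ioc {N i : ℕ} {k : ℕ → ℕ}
    (hk : StrictMonoOn k (Set.Iio N)) (hi : i < N) :
    #{x ∈ (range N).image k | k 0 < x ∧ x ≤ k i} = i := by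
  rw [filter_image, card_image_of_injOn]
  · convert (Nat.card_Ioc 0 i).trans (Nat.sub_zero i) using 2
    ext j
    simp only [mem_filter, mem_range, mem_Ioc]
    have h0 : 0 ∈ Set.Iio N := Set.mem_Iio.mpr (by omega)
    constructor
    · rintro ⟨hj, h0j, hji⟩
      exact ⟨(hk.lt_iff_lt h0 hj).mp h0j, (hk.le_iff_le hj hi).mp hji⟩
    · rintro ⟨h0j, hji⟩
      have hj : j < N := by omega
      exact ⟨hj, (hk.lt_iff_lt h0 hj).mpr h0j, (hk.le_iff_le hj hi).mpr hji⟩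
  · exact hk.injOn.mono fun j hj => mem_range.mp (mem_filter.mp hj).1

section Enumeration

variable {a b N : ℕ} {k : ℕ → ℕ}

theorem enum_le_mul_of_image_eq (hS : (range N).image k = multiplesUnion a b) {i : ℕ}
    (hi : i < N) : k i ≤ a * b :=
  (mem_multiplesUnion.mp (hS ▸ mem_image_of_mem k (mem_range.mpr hi))).2

theorem exists_enum_eq_of_image_eq (hS : (range N).image k = multiplesUnion a b) {x : ℕ}
    (hx : x ∈ multiplesUnion a b) : ∃ i < N, k i = x := by
  simpa [← hS] using hx

theorem enum_zero_of_image_eq (hk : StrictMonoOn k (Set.Iio N))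
    (hS : (range N).image k = multiplesUnion a b) : k 0 = 0 := by
  obtain ⟨i, hi, hki⟩ := exists_enum_eq_of_image_eq hS
    (mem_multiplesUnion.mpr ⟨Or.inl (dvd_zero a), Nat.zero_le _⟩)
  have := hk.monotoneOn (Set.mem_Iio.mpr (by omega)) hi (Nat.zero_le i)
  omega

theorem enum_pred_of_image_eq (hk : StrictMonoOn k (Set.Iio N))
    (hS : (range N).image k = multiplesUnion a b) : k (N - 1) = a * b := by
  obtain ⟨i, hi, hki⟩ := exists_enum_eq_of_image_eq hS
    (mem_multiplesUnion.mpr ⟨Or.inl (dvd_mul_right a b), le_rfl⟩)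
  have hle : k i ≤ k (N - 1) := hk.monotoneOn hi (Set.mem_Iio.mpr (by omega)) (by omega)
  have hge : k (N - 1) ≤ a * b := enum_le_mul_of_image_eq hS (by omega)
  omega

theorem eq_card_Ioc_of_image_eq (hk : StrictMonoOn k (Set.Iio N))
    (hS : (range N).image k = multiplesUnion a b) {i : ℕ} (hi : i < N) :
    i = #{x ∈ Ioc 0 (k i) | a ∣ x ∨ b ∣ x} := by
  have hki : k i ≤ a * b := enum_le_mul_of_image_eq hS hi
  conv_lhs => rw [← hk.card_filter_image_Ioc hi, hS, enum_zero_of_image_eq hk hS]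
  congr 1
  ext x
  simp only [mem_filter, mem_multiplesUnion, mem_Ioc]
  constructor
  · rintro ⟨⟨hdvd, -⟩, hx⟩
    exact ⟨hx, hdvd⟩
  · rintro ⟨hx, hdvd⟩
    exact ⟨⟨hdvd, hx.2.trans hki⟩, hx⟩

variable {v : ℕ → ℕ}

theorem index_zero (hk : StrictMonoOn k (Set.Iio N)) (hS : (range N).image k = multiplesUnion a b)
    (hv : ∀ j ≤ b, v j < N ∧ k (v j) = j * a) : v 0 = 0 := by
  obtain ⟨hv0, hkv0⟩ := hv 0 (Nat.zero_le b)
  refine hk.injOn hv0 (Set.mem_Iio.mpr (by omega)) ?_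
  rw [hkv0, enum_zero_of_image_eq hk hS, zero_mul]

theorem index_self (hk : StrictMonoOn k (Set.Iio N)) (hS : (range N).image k = multiplesUnion a b)
    (hv : ∀ j ≤ b, v j < N ∧ k (v j) = j * a) : v b = N - 1 := by
  obtain ⟨hvb, hkvb⟩ := hv b le_rfl
  refine hk.injOn hvb (Set.mem_Iio.mpr (by omega)) ?_
  rw [hkvb, enum_pred_of_image_eq hk hS, mul_comm]

theorem index_lt_index (hk : StrictMonoOn k (Set.Iio N)) (hv : ∀ j ≤ b, v j < N ∧ k (v j) = j * a)
    (ha : 0 < a) : ∀ j₁ j₂, j₁ < j₂ → j₂ ≤ b → v j₁ < v j₂ := by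
  intro j₁ j₂ hj hj₂
  refine (hk.lt_iff_lt (hv j₁ (by omega)).1 (hv j₂ hj₂).1).mp ?_
  rw [(hv j₁ (by omega)).2, (hv j₂ hj₂).2]
  exact Nat.mul_lt_mul_of_pos_right hj ha

theorem index_eq_div_add (hk : StrictMonoOn k (Set.Iio N))
    (hS : (range N).image k = multiplesUnion a b) (hv : ∀ j ≤ b, v j < N ∧ k (v j) = j * a)
    (ha : 0 < a) (hab : a.Coprime b) {j : ℕ} (hj : j < b) : v j = j * a / b + j := by
  obtain ⟨hvj, hkvj⟩ := hv j hj.le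
  rw [eq_card_Ioc_of_image_eq hk hS hvj, hkvj, card_filter_Ioc_dvd_or_dvd ha hab hj]

theorem index_add_index_sub (hk : StrictMonoOn k (Set.Iio N))
    (hS : (range N).image k = multiplesUnion a b) (hv : ∀ j ≤ b, v j < N ∧ k (v j) = j * a)
    (ha : 0 < a) (hab : a.Coprime b) (hN : N = a + b) : ∀ j ≤ b, v j + v (b - j) = N - 1 := by
  intro j hj
  obtain rfl | hj₀ := Nat.eq_zero_or_pos j
  · rw [index_zero hk hS hv, Nat.sub_zero, index_self hk hS hv, zero_add]
  obtain rfl | hjb := hj.eq_or_lt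
  · rw [index_self hk hS hv, Nat.sub_self, index_zero hk hS hv, add_zero]
  have hndvd : ¬ b ∣ j * a := fun hdvd =>
    absurd (Nat.le_of_dvd hj₀ (hab.symm.dvd_of_dvd_mul_right hdvd)) (by omega)
  have hfloor : j * a / b + (b - j) * a / b = a - 1 :=
    Nat.div_add_div_of_add_eq_mul (by rw [← add_mul, Nat.add_sub_cancel' hj, mul_comm]) hndvd
  rw [index_eq_div_add hk hS hv ha hab hjb, index_eq_div_add hk hS hv ha hab (by omega)]
  omega

end Enumeration

theorem u_w_index_properties_general (m n : ℕ) (hm : 2 ≤ m)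
    (hcop : Nat.Coprime m n) (k : ℕ → ℕ)
    (hmono : ∀ i j : ℕ, i < j → j < m + n → k i < k j)
    (hmem : ∀ x : ℕ, ((m ∣ x ∨ n ∣ x) ∧ x ≤ m * n) ↔ ∃ i < m + n, k i = x)
    (u w : ℕ → ℕ)
    (hu : ∀ j ≤ n, u j < m + n ∧ k (u j) = j * m)
    (hw : ∀ j ≤ m, w j < m + n ∧ k (w j) = j * n) :
    u 0 = 0 ∧ w 0 = 0 ∧ u n = m + n - 1 ∧ w m = m + n - 1 ∧
    (∀ j, 1 ≤ j → j ≤ n - 1 → u j = j * m / n + j) ∧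
    (∀ j, 1 ≤ j → j ≤ m - 1 → w j = j * n / m + j) ∧
    (∀ j₁ j₂, j₁ < j₂ → j₂ ≤ n → u j₁ < u j₂) ∧
    (∀ j₁ j₂, j₁ < j₂ → j₂ ≤ m → w j₁ < w j₂) ∧
    (∀ j ≤ n, u j + u (n - j) = m + n - 1) ∧
    (∀ j ≤ m, w j + w (m - j) = m + n - 1) := by
  have hm₀ : 0 < m := by omega
  have hn₀ : 0 < n := Nat.pos_of_ne_zero fun hn => by
    rw [hn, Nat.coprime_zero_right] at hcop
    omega
  have hk : StrictMonoOn k (Set.Iio (m + n)) := fun i _ j hj hij => hmono i j hij hj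
  have hS : (range (m + n)).image k = multiplesUnion m n := by
    ext x
    simp [mem_multiplesUnion, hmem]
  have hS' : (range (m + n)).image k = multiplesUnion n m := hS.trans (multiplesUnion_comm m n)
  exact ⟨index_zero hk hS hu, index_zero hk hS' hw, index_self hk hS hu, index_self hk hS' hw,
    fun j _ hj => index_eq_div_add hk hS hu hm₀ hcop (by omega),
    fun j _ hj => index_eq_div_add hk hS' hw hn₀ hcop.symm (by omega),
    index_lt_index hk hu hm₀, index_lt_index hk hw hn₀,
    index_add_index_sub hk hS hu hm₀ hcop rfl,
    index_add_index_sub hk hS' hw hn₀ hcop.symm (add_comm m n)⟩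

/-- With `k` the increasing enumeration of
`𝔉(m,n) = (mℤ ∪ nℤ) ∩ [0, mn]` and `u j`, `w j` the indices with
`k (u j) = j*m` and `k (w j) = j*n`, one has:
`u 0 = w 0 = 0`, `u n = w m = m+n-1`, the floor formulas
`u j = ⌊j*m/n⌋ + j` (for `1 ≤ j ≤ n-1`) and `w j = ⌊j*n/m⌋ + j`
(for `1 ≤ j ≤ m-1`), both sequences are strictly increasing, and
`u j + u (n-j) = w j' + w (m-j') = m+n-1`. -/
theorem u_w_index_properties (m n : ℕ) (hm : 2 ≤ m) (hmn : m < n)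
    (hcop : Nat.Coprime m n) (k : ℕ → ℕ)
    (hmono : ∀ i j : ℕ, i < j → j < m + n → k i < k j)
    (hmem : ∀ x : ℕ, ((m ∣ x ∨ n ∣ x) ∧ x ≤ m * n) ↔ ∃ i < m + n, k i = x)
    (u w : ℕ → ℕ)
    (hu : ∀ j ≤ n, u j < m + n ∧ k (u j) = j * m)
    (hw : ∀ j ≤ m, w j < m + n ∧ k (w j) = j * n) :
    u 0 = 0 ∧ w 0 = 0 ∧ u n = m + n - 1 ∧ w m = m + n - 1 ∧
    (∀ j, 1 ≤ j → j ≤ n - 1 → u j = j * m / n + j) ∧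
    (∀ j, 1 ≤ j → j ≤ m - 1 → w j = j * n / m + j) ∧
    (∀ j₁ j₂, j₁ < j₂ → j₂ ≤ n → u j₁ < u j₂) ∧
    (∀ j₁ j₂, j₁ < j₂ → j₂ ≤ m → w j₁ < w j₂) ∧
    (∀ j ≤ n, u j + u (n - j) = m + n - 1) ∧
    (∀ j ≤ m, w j + w (m - j) = m + n - 1) :=
  u_w_index_properties_general m n hm hcop k hmono hmem u w hu hw
end

section
/- σ(0) = 0, σ(m) = 1 and σ(n−m) = n−1. Moreover, for every i with 1 ≤ i ≤ n−1 and i ≠ n−m, the difference u_{σ(i)+1} − u_{σ(i)} equals 1 or 2, and it equals 2 if and only if n−m+1 ≤ i ≤ n−1. -/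
/-- With `k` the increasing enumeration of
`𝔉(m,n)`, `u j` the index with `k (u j) = j*m`, `m̄` an inverse of `m`
modulo `n`, and `σ i = [i * m̄]_n`:  one has `σ 0 = 0`, `σ m = 1`,
`σ (n-m) = n-1`; and for `1 ≤ i ≤ n-1` with `i ≠ n-m`, the difference
`u (σ i + 1) - u (σ i)` equals `1` or `2`, and it equals `2` iff
`n-m+1 ≤ i ≤ n-1`. -/
theorem sigma_u_gap (m n : ℕ) (hm : 2 ≤ m) (hmn : m < n)
    (hcop : Nat.Coprime m n) (k : ℕ → ℕ)
    (hmono : ∀ i j : ℕ, i < j → j < m + n → k i < k j)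
    (hmem : ∀ x : ℕ, ((m ∣ x ∨ n ∣ x) ∧ x ≤ m * n) ↔ ∃ i < m + n, k i = x)
    (u : ℕ → ℕ)
    (hu : ∀ j ≤ n, u j < m + n ∧ k (u j) = j * m)
    (mbar : ℕ) (hmbar : m * mbar ≡ 1 [MOD n])
    (σ : ℕ → ℕ) (hσ : ∀ i, σ i = i * mbar % n) :
    σ 0 = 0 ∧ σ m = 1 ∧ σ (n - m) = n - 1 ∧
    (∀ i, 1 ≤ i → i ≤ n - 1 → i ≠ n - m →
      (u (σ i + 1) - u (σ i) = 1 ∨ u (σ i + 1) - u (σ i) = 2) ∧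
      (u (σ i + 1) - u (σ i) = 2 ↔ (n - m + 1 ≤ i ∧ i ≤ n - 1))) := by
  have hn2 : 2 < n := by omega
  have hm0 : 0 < m := by omega
  have hn0 : 0 < n := by omega
  -- order reflection
  have hrefl : ∀ a b : ℕ, a < m + n → b < m + n → k a < k b → a < b := by
    intro a b ha hb hk
    by_contra h
    push_neg at h
    rcases Nat.lt_or_eq_of_le h with h' | h'
    · exact absurd (hmono b a h' ha) (by omega)
    · subst h'; exact lt_irrefl _ hk
  -- any element of the enumeration strictly between consecutive multiples of m
  -- is a multiple of n
  have hmulN : ∀ j t : ℕ, j + 1 ≤ n → t < m + n → j * m < k t → k t < (j+1) * m →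
      n ∣ k t := by
    intro j t hj ht h1 h2
    have hF := (hmem (k t)).2 ⟨t, ht, rfl⟩
    rcases hF.1 with hd | hd
    · obtain ⟨a, ha⟩ := hd
      rw [ha] at h1 h2
      have hja : j < a :=
        Nat.lt_of_mul_lt_mul_left (a := m) (by rw [Nat.mul_comm m j]; exact h1)
      have haj : a < j + 1 :=
        Nat.lt_of_mul_lt_mul_left (a := m) (by rw [Nat.mul_comm m (j+1)]; exact h2)
      omega
    · exact hd
  -- the gap lemma
  have hgap : ∀ j : ℕ, j + 1 ≤ n →
      ((∃ q, j * m < q * n ∧ q * n < (j+1) * m) → u (j+1) = u j + 2) ∧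
      (¬ (∃ q, j * m < q * n ∧ q * n < (j+1) * m) → u (j+1) = u j + 1) := by
    intro j hj
    obtain ⟨huj1, huj2⟩ := hu j (by omega)
    obtain ⟨huj1', huj2'⟩ := hu (j+1) hj
    have hlt : u j < u (j+1) := by
      apply hrefl _ _ huj1 huj1'
      rw [huj2, huj2']
      have h5 : (j+1) * m = j * m + m := by ring
      omega
    constructor
    · rintro ⟨q, hq1, hq2⟩
      have hqle : q * n ≤ m * n := by
        have h1 : (j+1) * m ≤ n * m := Nat.mul_le_mul hj (le_refl m)
        have h2 : n * m = m * n := Nat.mul_comm n m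
        omega
      obtain ⟨t, ht, hkt⟩ := (hmem (q * n)).1 ⟨Or.inr ⟨q, Nat.mul_comm q n⟩, hqle⟩
      have h1 : u j < t := hrefl _ _ huj1 ht (by rw [huj2, hkt]; exact hq1)
      have h2 : t < u (j+1) := hrefl _ _ ht huj1' (by rw [huj2', hkt]; exact hq2)
      by_contra hne
      have h3 : u j + 2 < u (j+1) := by omega
      have ht1 : u j + 1 < m + n := by omega
      have ht2 : u j + 2 < m + n := by omega
      have hk1l : j * m < k (u j + 1) := by
        rw [← huj2]; exact hmono _ _ (by omega) ht1
      have hk1u : k (u j + 1) < (j+1) * m := by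
        rw [← huj2']; exact hmono _ _ (by omega) huj1'
      have h12 : k (u j + 1) < k (u j + 2) := hmono _ _ (by omega) ht2
      have hk2l : j * m < k (u j + 2) := by omega
      have hk2u : k (u j + 2) < (j+1) * m := by
        rw [← huj2']; exact hmono _ _ (by omega) huj1'
      obtain ⟨a, ha⟩ := hmulN j (u j + 1) hj ht1 hk1l hk1u
      obtain ⟨b, hb⟩ := hmulN j (u j + 2) hj ht2 hk2l hk2u
      have hab : a < b :=
        Nat.lt_of_mul_lt_mul_left (a := n) (by rw [← ha, ← hb]; exact h12)
      have hmul : n * (a+1) ≤ n * b := Nat.mul_le_mul (le_refl n) (by omega)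
      have hna : n * (a+1) = n * a + n := by ring
      have hsum : (j+1) * m = j * m + m := by ring
      omega
    · intro hno
      by_contra hne
      have h3 : u j + 1 < u (j+1) := by omega
      have ht : u j + 1 < m + n := by omega
      have hk1 : j * m < k (u j + 1) := by
        rw [← huj2]; exact hmono _ _ (by omega) ht
      have hk2 : k (u j + 1) < (j+1) * m := by
        rw [← huj2']; exact hmono _ _ h3 huj1'
      obtain ⟨a, ha⟩ := hmulN j (u j + 1) hj ht hk1 hk2
      exact hno ⟨a, by rw [Nat.mul_comm a n, ← ha]; exact hk1,
        by rw [Nat.mul_comm a n, ← ha]; exact hk2⟩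
  -- condition for a multiple of n strictly between
  have hcond : ∀ j : ℕ, (∃ q, j * m < q * n ∧ q * n < (j+1) * m) ↔ n - m < j * m % n := by
    intro j
    have hd : n * (j * m / n) + j * m % n = j * m := Nat.div_add_mod (j * m) n
    set d := j * m / n with hdd
    set r := j * m % n with hrr
    have hr : r < n := Nat.mod_lt _ hn0
    constructor
    · rintro ⟨q, h1, h2⟩
      have hdq : d < q := by
        by_contra hc
        push_neg at hc
        have h6 : q * n ≤ d * n := Nat.mul_le_mul hc (le_refl n)
        have h7 : d * n = n * d := Nat.mul_comm d n
        omega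
      have h8 : (d+1) * n ≤ q * n := Nat.mul_le_mul (by omega) (le_refl n)
      have h4 : (d+1) * n = n * d + n := by ring
      have h5 : (j+1) * m = j * m + m := by ring
      omega
    · intro hr2
      refine ⟨d + 1, ?_, ?_⟩
      · have h4 : (d+1) * n = n * d + n := by ring
        omega
      · have h4 : (d+1) * n = n * d + n := by ring
        have h5 : (j+1) * m = j * m + m := by ring
        omega
  refine ⟨?_, ?_, ?_, ?_⟩
  · rw [hσ]; simp
  · rw [hσ]
    have h1 : m * mbar % n = 1 % n := hmbar
    rw [h1, Nat.mod_eq_of_lt (by omega)]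
  · rw [hσ]
    have h1 : ((n - m) * mbar + m * mbar) % n = 0 := by
      have h6 : (n - m) * mbar + m * mbar = n * mbar := by
        rw [← Nat.add_mul]; congr 1; omega
      rw [h6]; exact Nat.mul_mod_right n mbar
    have h2 : m * mbar % n = 1 := by
      have h7 : m * mbar % n = 1 % n := hmbar
      rw [Nat.mod_eq_of_lt (show 1 < n by omega)] at h7; exact h7
    have h3 : ((n - m) * mbar % n + m * mbar % n) % n = 0 := by
      rw [← Nat.add_mod]; exact h1
    rw [h2] at h3
    set s := (n - m) * mbar % n with hs
    have hsn : s < n := Nat.mod_lt _ hn0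
    rcases Nat.lt_or_ge (s + 1) n with h | h
    · rw [Nat.mod_eq_of_lt h] at h3; omega
    · omega
  · intro i hi1 hi2 hineq
    have hiofj : σ i * m % n = i := by
      have h3 : σ i * m ≡ i [MOD n] := by
        calc σ i * m ≡ i * mbar * m [MOD n] := by
              rw [hσ]; exact (Nat.mod_modEq (i * mbar) n).mul_right m
          _ = i * (m * mbar) := by ring
          _ ≡ i * 1 [MOD n] := Nat.ModEq.mul_left i hmbar
          _ = i := by ring
      have h4 : σ i * m % n = i % n := h3
      rw [h4, Nat.mod_eq_of_lt (by omega)]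
    have hjn : σ i < n := by rw [hσ]; exact Nat.mod_lt _ hn0
    have hg := hgap (σ i) (by omega)
    have hc := hcond (σ i)
    rw [hiofj] at hc
    by_cases hcase : n - m + 1 ≤ i
    · have h2 : u (σ i + 1) = u (σ i) + 2 := hg.1 (hc.2 (by omega))
      refine ⟨Or.inr (by omega), ?_, fun _ => by omega⟩
      intro _; exact ⟨hcase, hi2⟩
    · have h1 : u (σ i + 1) = u (σ i) + 1 :=
        hg.2 (fun hex => absurd (hc.1 hex) (by omega))
      refine ⟨Or.inl (by omega), ?_, ?_⟩
      · intro h; omega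
      · rintro ⟨h, -⟩; omega
end

section
/- For every i with 1 ≤ i ≤ n−m−1, one has σ(m+i) = σ(i)+1 and u_{σ(m+i)} = u_{σ(i)}+1. For every i with 1 ≤ i ≤ m−1, one has σ(n−m+i) = σ(i)−1 and u_{σ(n−m+i)} = u_{σ(i)}−2. -/
/-!
Since `m * m̄ ≡ 1 (mod n)`, `σ i` is the unique `s < n` with `s * m ≡ i (mod n)`, which gives the
shifts `σ (m + i) = σ i + 1` and `σ (n - m + i) = σ i - 1` once one checks that no wrap-around
occurs. The index `u` jumps from `s` to `s + 1` by one more than the number of multiples of `n`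
strictly between `s m` and `(s + 1) m`; writing `s m = n q + i` with `i = s m mod n`, that open
interval contains no multiple of `n` when `1 ≤ i` and `i + m < n`, and exactly one, namely `n q`,
when `1 ≤ i < m`.
-/

theorem eq_add_one_of_forall_notMem_Ioo {N : ℕ} {k : ℕ → ℕ} {S : Set ℕ}
    (hk : ∀ i j, i < j → j < N → k i < k j) (hS : ∀ i < N, k i ∈ S)
    {a b : ℕ} (ha : a < N) (hb : b < N) (hab : k a < k b)
    (hgap : ∀ x ∈ S, x ∉ Set.Ioo (k a) (k b)) : b = a + 1 := by
  have hlt : a < b := by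
    by_contra! hba
    rcases hba.lt_or_eq with hba | rfl
    · exact (hk b a hba ha).not_gt hab
    · exact hab.false
  by_contra hne
  have hsucc : a + 1 < b := by omega
  exact hgap _ (hS _ (hsucc.trans hb)) ⟨hk _ _ (Nat.lt_succ_self a) (hsucc.trans hb),
    hk _ _ hsucc hb⟩

section Residues

variable {m n mbar : ℕ}

theorem mul_mod_eq_iff_mul_modEq (hmbar : m * mbar ≡ 1 [MOD n]) {i s : ℕ} (hs : s < n) :
    i * mbar % n = s ↔ s * m ≡ i [MOD n] := by
  constructor
  · rintro rfl
    calc i * mbar % n * m ≡ i * mbar * m [MOD n] := (Nat.mod_modEq _ _).mul_right _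
      _ = i * (m * mbar) := by ring
      _ ≡ i * 1 [MOD n] := hmbar.mul_left _
      _ = i := mul_one i
  · intro h
    have : i * mbar ≡ s [MOD n] :=
      calc i * mbar ≡ s * m * mbar [MOD n] := h.symm.mul_right _
        _ = s * (m * mbar) := by ring
        _ ≡ s * 1 [MOD n] := hmbar.mul_left _
        _ = s := mul_one s
    rwa [Nat.ModEq, Nat.mod_eq_of_lt hs] at this

theorem add_mul_mod_eq_mul_mod_add_one (hmbar : m * mbar ≡ 1 [MOD n]) {i : ℕ}
    (hi : 1 ≤ i) (him : i + m < n) : (m + i) * mbar % n = i * mbar % n + 1 := by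
  set s := i * mbar % n
  have hs : s * m ≡ i [MOD n] := (mul_mod_eq_iff_mul_modEq hmbar (Nat.mod_lt _ (by omega))).1 rfl
  have hsucc : s + 1 < n := by
    have hsn : s < n := Nat.mod_lt _ (by omega)
    by_contra h
    have hns : n = s + 1 := by omega
    have hzero : i + m ≡ 0 [MOD n] :=
      calc i + m ≡ s * m + m [MOD n] := hs.symm.add_right m
        _ = n * m := by rw [hns]; ring
        _ ≡ 0 [MOD n] := Nat.modEq_zero_iff_dvd.2 (dvd_mul_right n m)
    rw [Nat.ModEq, Nat.mod_eq_of_lt him, Nat.zero_mod] at hzero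
    omega
  refine (mul_mod_eq_iff_mul_modEq hmbar hsucc).2 ?_
  calc (s + 1) * m = s * m + m := by ring
    _ ≡ i + m [MOD n] := hs.add_right m
    _ = m + i := add_comm i m

theorem sub_add_mul_mod_add_one_eq_mul_mod (hmbar : m * mbar ≡ 1 [MOD n]) (hmn : m ≤ n)
    {i : ℕ} (hi : 1 ≤ i) (him : i < m) : (n - m + i) * mbar % n + 1 = i * mbar % n := by
  set r := (n - m + i) * mbar % n
  have hn : 0 < n := by omega
  have hr : r * m ≡ n - m + i [MOD n] :=
    (mul_mod_eq_iff_mul_modEq hmbar (Nat.mod_lt _ hn)).1 rfl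
  have hsucc : (r + 1) * m ≡ i [MOD n] :=
    calc (r + 1) * m = r * m + m := by ring
      _ ≡ n - m + i + m [MOD n] := hr.add_right m
      _ = i + n := by omega
      _ ≡ i + 0 [MOD n] := Nat.ModEq.add_left i (Nat.modEq_zero_iff_dvd.2 dvd_rfl)
      _ = i := add_zero i
  have hrn : r + 1 < n := by
    by_contra h
    have hns : r + 1 = n := by have := Nat.mod_lt ((n - m + i) * mbar) hn; omega
    rw [hns, Nat.ModEq, Nat.mul_mod_right, Nat.mod_eq_of_lt (by omega)] at hsucc
    omega
  exact ((mul_mod_eq_iff_mul_modEq hmbar hrn).2 hsucc).symm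

theorem not_dvd_of_mem_Ioo {a x : ℕ} (h0 : 0 < a % n) (hlt : a % n + m < n)
    (hx : x ∈ Set.Ioo a (a + m)) : ¬ n ∣ x := by
  have hdiv := Nat.div_add_mod a n
  refine Nat.not_dvd_of_lt_of_lt_mul_succ (k := a / n) ?_ ?_
  · linarith [hx.1]
  · rw [mul_add, mul_one]; linarith [hx.2]

end Residues

section Enumeration

variable {m n : ℕ} {k u : ℕ → ℕ}

theorem dvd_of_mem_Ioo_mul {s x : ℕ} (hx : m ∣ x ∨ n ∣ x)
    (h : x ∈ Set.Ioo (s * m) ((s + 1) * m)) : n ∣ x := by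
  refine hx.resolve_left (Nat.not_dvd_of_lt_of_lt_mul_succ (k := s) ?_ ?_)
  · rw [mul_comm]; exact h.1
  · rw [mul_comm]; exact h.2

theorem index_succ_eq_add_one (hmono : ∀ i j : ℕ, i < j → j < m + n → k i < k j)
    (hmem : ∀ x : ℕ, ((m ∣ x ∨ n ∣ x) ∧ x ≤ m * n) ↔ ∃ i < m + n, k i = x)
    (hu : ∀ j ≤ n, u j < m + n ∧ k (u j) = j * m) (hm : 0 < m) {s : ℕ} (hs : s + 1 ≤ n)
    (hgap : ∀ x ∈ Set.Ioo (s * m) ((s + 1) * m), ¬ n ∣ x) : u (s + 1) = u s + 1 := by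
  obtain ⟨hus, hks⟩ := hu s (by omega)
  obtain ⟨hus', hks'⟩ := hu (s + 1) hs
  refine eq_add_one_of_forall_notMem_Ioo (S := {x | m ∣ x ∨ n ∣ x}) hmono
    (fun i hi => ((hmem _).2 ⟨i, hi, rfl⟩).1) hus hus' ?_ ?_
  · rw [hks, hks']; nlinarith
  · intro x hx hIoo
    rw [hks, hks'] at hIoo
    exact hgap x hIoo (dvd_of_mem_Ioo_mul hx hIoo)

theorem index_succ_eq_add_two (hmono : ∀ i j : ℕ, i < j → j < m + n → k i < k j)
    (hmem : ∀ x : ℕ, ((m ∣ x ∨ n ∣ x) ∧ x ≤ m * n) ↔ ∃ i < m + n, k i = x)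
    (hu : ∀ j ≤ n, u j < m + n ∧ k (u j) = j * m) (hmn : m < n) {s q : ℕ} (hs : s + 1 ≤ n)
    (hq : n * q ∈ Set.Ioo (s * m) ((s + 1) * m)) : u (s + 1) = u s + 2 := by
  obtain ⟨hus, hks⟩ := hu s (by omega)
  obtain ⟨hus', hks'⟩ := hu (s + 1) hs
  have hqle : n * q ≤ m * n :=
    calc n * q ≤ (s + 1) * m := hq.2.le
      _ ≤ n * m := Nat.mul_le_mul_right m hs
      _ = m * n := mul_comm n m
  obtain ⟨t, ht, hkt⟩ := (hmem (n * q)).1 ⟨Or.inr (dvd_mul_right n q), hqle⟩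
  have hS : ∀ i < m + n, k i ∈ {x | m ∣ x ∨ n ∣ x} := fun i hi => ((hmem _).2 ⟨i, hi, rfl⟩).1
  -- the interval has length `m < n`, so it holds at most one multiple of `n`
  have honly : ∀ x, (m ∣ x ∨ n ∣ x) → x ∈ Set.Ioo (s * m) ((s + 1) * m) → x = n * q := by
    intro x hx hIoo
    obtain ⟨c, rfl⟩ := dvd_of_mem_Ioo_mul hx hIoo
    have hlen : (s + 1) * m = s * m + m := by ring
    rcases lt_trichotomy c q with hcq | rfl | hqc
    · have := Nat.mul_le_mul_left n (Nat.succ_le_of_lt hcq)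
      rw [Nat.mul_succ] at this
      have := hIoo.1; have := hq.2; omega
    · rfl
    · have := Nat.mul_le_mul_left n (Nat.succ_le_of_lt hqc)
      rw [Nat.mul_succ] at this
      have := hIoo.2; have := hq.1; omega
  have hlow : t = u s + 1 := by
    refine eq_add_one_of_forall_notMem_Ioo hmono hS hus ht (by rw [hks, hkt]; exact hq.1) ?_
    rintro x hx ⟨h1, h2⟩
    rw [hks] at h1; rw [hkt] at h2
    exact h2.ne (honly x hx ⟨h1, h2.trans hq.2⟩)
  have hhigh : u (s + 1) = t + 1 := by
    refine eq_add_one_of_forall_notMem_Ioo hmono hS ht hus' (by rw [hks', hkt]; exact hq.2) ?_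
    rintro x hx ⟨h1, h2⟩
    rw [hkt] at h1; rw [hks'] at h2
    exact h1.ne' (honly x hx ⟨hq.1.trans h1, h2⟩)
  omega

end Enumeration

theorem sigma_shift_general (m n : ℕ) (hm : 2 ≤ m) (hmn : m < n)
    (k : ℕ → ℕ)
    (hmono : ∀ i j : ℕ, i < j → j < m + n → k i < k j)
    (hmem : ∀ x : ℕ, ((m ∣ x ∨ n ∣ x) ∧ x ≤ m * n) ↔ ∃ i < m + n, k i = x)
    (u : ℕ → ℕ)
    (hu : ∀ j ≤ n, u j < m + n ∧ k (u j) = j * m)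
    (mbar : ℕ) (hmbar : m * mbar ≡ 1 [MOD n])
    (σ : ℕ → ℕ) (hσ : ∀ i, σ i = i * mbar % n) :
    (∀ i, 1 ≤ i → i ≤ n - m - 1 →
      σ (m + i) = σ i + 1 ∧ u (σ (m + i)) = u (σ i) + 1) ∧
    (∀ i, 1 ≤ i → i ≤ m - 1 →
      σ (n - m + i) = σ i - 1 ∧ u (σ (n - m + i)) = u (σ i) - 2) := by
  have hσlt : ∀ i, σ i < n := fun i => hσ i ▸ Nat.mod_lt _ (by omega)
  have hres : ∀ i < n, σ i * m % n = i := fun i hi => by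
    have := (mul_mod_eq_iff_mul_modEq hmbar (hσlt i)).1 (hσ i).symm
    rwa [Nat.ModEq, Nat.mod_eq_of_lt hi] at this
  constructor
  · intro i hi1 hi2
    have hshift : σ (m + i) = σ i + 1 := by
      rw [hσ, hσ]; exact add_mul_mod_eq_mul_mod_add_one hmbar hi1 (by omega)
    refine ⟨hshift, hshift ▸ index_succ_eq_add_one hmono hmem hu (by omega)
      (by rw [← hshift]; exact (hσlt _).le) fun x hx => ?_⟩
    rw [add_one_mul] at hx
    exact not_dvd_of_mem_Ioo (by rw [hres i (by omega)]; omega)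
      (by rw [hres i (by omega)]; omega) hx
  · intro i hi1 hi2
    have hshift : σ (n - m + i) + 1 = σ i := by
      rw [hσ, hσ]; exact sub_add_mul_mod_add_one_eq_mul_mod hmbar hmn.le hi1 (by omega)
    have hmod := hres i (by omega)
    have hrn := hσlt i
    rw [← hshift] at hmod hrn ⊢
    generalize σ (n - m + i) = r at hmod hrn ⊢
    have hdiv := Nat.div_add_mod ((r + 1) * m) n
    have hlen : (r + 1) * m = r * m + m := add_one_mul r m
    rw [hmod] at hdiv
    have htwo := index_succ_eq_add_two hmono hmem hu hmn (s := r) (q := (r + 1) * m / n)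
      hrn.le ⟨by omega, by omega⟩
    omega

/-- With `k` the increasing enumeration of `𝔉(m,n)`,
`u j` the index with `k (u j) = j*m`, `m̄` an inverse of `m` modulo `n`,
and `σ i = [i * m̄]_n`:  for `1 ≤ i ≤ n-m-1` one has `σ (m+i) = σ i + 1`
and `u (σ (m+i)) = u (σ i) + 1`; for `1 ≤ i ≤ m-1` one has
`σ (n-m+i) = σ i - 1` and `u (σ (n-m+i)) = u (σ i) - 2`. -/
theorem sigma_shift (m n : ℕ) (hm : 2 ≤ m) (hmn : m < n)
    (hcop : Nat.Coprime m n) (k : ℕ → ℕ)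
    (hmono : ∀ i j : ℕ, i < j → j < m + n → k i < k j)
    (hmem : ∀ x : ℕ, ((m ∣ x ∨ n ∣ x) ∧ x ≤ m * n) ↔ ∃ i < m + n, k i = x)
    (u : ℕ → ℕ)
    (hu : ∀ j ≤ n, u j < m + n ∧ k (u j) = j * m)
    (mbar : ℕ) (hmbar : m * mbar ≡ 1 [MOD n])
    (σ : ℕ → ℕ) (hσ : ∀ i, σ i = i * mbar % n) :
    (∀ i, 1 ≤ i → i ≤ n - m - 1 →
      σ (m + i) = σ i + 1 ∧ u (σ (m + i)) = u (σ i) + 1) ∧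
    (∀ i, 1 ≤ i → i ≤ m - 1 →
      σ (n - m + i) = σ i - 1 ∧ u (σ (n - m + i)) = u (σ i) - 2) :=
  sigma_shift_general m n hm hmn k hmono hmem u hu mbar hmbar σ hσ
end

section
/- The map ρ restricts to a bijection of {1, 2, …, m−1} onto itself; in fact ρ(i) = [(m−i)·n̄]_m where n·n̄ ≡ 1 (mod m). Moreover, for every i with 1 ≤ i ≤ m−1 one has w_{ρ(i)} = u_{σ(i)} − 1. -/
/-!
For `1 ≤ i ≤ m - 1`, `σ i` is the residue `s ∈ [1, n - 1]` with `s * m ≡ i (mod n)`, so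
`ρ i * n + i = σ i * m`, which forces `1 ≤ ρ i ≤ m - 1`. Reducing this identity mod `m` gives
`ρ i * n ≡ -i`, hence the formula for `ρ i` and the injectivity of `ρ`. Since `0 < i < m < n`,
no multiple of `m` or of `n` lies strictly between `ρ i * n` and `σ i * m`, so these two
elements of `𝔉(m,n)` are consecutive in its enumeration.
-/

namespace Nat

lemma mul_inv_mod_mul_modEq {m mbar n : ℕ} (hmbar : m * mbar ≡ 1 [MOD n]) (i : ℕ) :
    i * mbar % n * m ≡ i [MOD n] :=
  calc i * mbar % n * m ≡ i * mbar * m [MOD n] := (Nat.mod_modEq _ n).mul_right m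
    _ = i * (m * mbar) := by ring
    _ ≡ i * 1 [MOD n] := hmbar.mul_left i
    _ = i := mul_one i

lemma mul_inv_mod_pos {m mbar n i : ℕ} (hmbar : m * mbar ≡ 1 [MOD n]) (hi : 0 < i)
    (hin : i < n) : 0 < i * mbar % n := by
  refine Nat.pos_of_ne_zero fun hzero => ?_
  have hdvd : n ∣ i := by
    simpa [hzero, Nat.modEq_zero_iff_dvd] using (mul_inv_mod_mul_modEq hmbar i).symm
  exact absurd (Nat.le_of_dvd hi hdvd) (by omega)

lemma sub_div_mul_add_of_modEq {a i n : ℕ} (h : a ≡ i [MOD n]) (hi : i ≤ a) :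
    (a - i) / n * n + i = a := by
  rw [Nat.div_mul_cancel ((Nat.modEq_iff_dvd' hi).mp h.symm), Nat.sub_add_cancel hi]

section MulAddEq

variable {a b i m n : ℕ}

lemma mem_Icc_of_mul_add_eq (h : a * n + i = b * m) (hb : 0 < b) (hbn : b < n) (him : i < m) :
    a ∈ Set.Icc 1 (m - 1) := by
  constructor
  · by_contra ha
    have : a = 0 := by omega
    subst this
    nlinarith
  · by_contra ha
    have : m ≤ a := by omega
    nlinarith

lemma eq_mul_inv_mod_of_mul_add_eq {nbar : ℕ} (h : a * n + i = b * m)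
    (hnbar : n * nbar ≡ 1 [MOD m]) (ham : a < m) (him : i ≤ m) :
    a = (m - i) * nbar % m := by
  have hsum : a * n + i ≡ (m - i) + i [MOD m] := by
    rw [h, Nat.sub_add_cancel him]
    exact (Nat.modEq_zero_iff_dvd.mpr (dvd_mul_left m b)).trans
      (Nat.modEq_zero_iff_dvd.mpr dvd_rfl).symm
  have hmul : a ≡ (m - i) * nbar [MOD m] :=
    calc a = a * 1 := (mul_one a).symm
      _ ≡ a * (n * nbar) [MOD m] := hnbar.symm.mul_left a
      _ = a * n * nbar := by ring
      _ ≡ (m - i) * nbar [MOD m] := (Nat.ModEq.add_right_cancel' i hsum).mul_right nbar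
  rw [← Nat.mod_eq_of_lt ham]
  exact hmul

lemma eq_of_mul_add_eq_mul {c j : ℕ} (hi : a * n + i = b * m) (hj : a * n + j = c * m)
    (him : i < m) (hjm : j < m) : i = j := by
  have hcongr : a * n + i ≡ a * n + j [MOD m] := by
    rw [hi, hj]
    exact (Nat.modEq_zero_iff_dvd.mpr (dvd_mul_left m b)).trans
      (Nat.modEq_zero_iff_dvd.mpr (dvd_mul_left m c)).symm
  exact (Nat.ModEq.add_left_cancel' _ hcongr).eq_of_lt_of_lt him hjm

lemma le_of_dvd_or_dvd_of_lt_of_mul_add_eq {x : ℕ} (h : a * n + i = b * m) (him : i ≤ m)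
    (hin : i ≤ n) (hx : m ∣ x ∨ n ∣ x) (hlt : x < b * m) : x ≤ a * n := by
  rcases hx with hmx | hnx
  · have hle : x ≤ b * m - m :=
      Nat.le_of_lt_add_of_dvd (by omega) hmx (Nat.dvd_sub (dvd_mul_left m b) dvd_rfl)
    omega
  · exact Nat.le_of_lt_add_of_dvd (by omega) hnx (dvd_mul_left n a)

end MulAddEq

end Nat

lemma eq_sub_one_of_forall_lt_le {k : ℕ → ℕ} {N p q : ℕ}
    (hmono : ∀ i j : ℕ, i < j → j < N → k i < k j) (hp : p < N) (hq : q < N)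
    (hpq : k p < k q) (hgap : ∀ j < N, k j < k q → k j ≤ k p) : p = q - 1 := by
  have hlt : p < q := by
    by_contra! hqp
    rcases hqp.eq_or_lt with rfl | hqp
    · exact lt_irrefl _ hpq
    · exact lt_asymm hpq (hmono q p hqp hp)
  have hpred : k (q - 1) ≤ k p := hgap _ (by omega) (hmono _ _ (by omega) hq)
  by_contra hne
  exact absurd (hmono p (q - 1) (by omega) (by omega)) (not_lt.mpr hpred)

theorem rho_bijection_general (m n : ℕ) (hmn : m < n)
    (k : ℕ → ℕ)
    (hmono : ∀ i j : ℕ, i < j → j < m + n → k i < k j)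
    (hmem : ∀ x : ℕ, ((m ∣ x ∨ n ∣ x) ∧ x ≤ m * n) ↔ ∃ i < m + n, k i = x)
    (u w : ℕ → ℕ)
    (hu : ∀ j ≤ n, u j < m + n ∧ k (u j) = j * m)
    (hw : ∀ j ≤ m, w j < m + n ∧ k (w j) = j * n)
    (mbar : ℕ) (hmbar : m * mbar ≡ 1 [MOD n])
    (σ : ℕ → ℕ) (hσ : ∀ i, σ i = i * mbar % n)
    (ρ : ℕ → ℕ) (hρ : ∀ i, ρ i = (σ i * m - i) / n)
    (nbar : ℕ) (hnbar : n * nbar ≡ 1 [MOD m]) :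
    Set.BijOn ρ (Set.Icc 1 (m - 1)) (Set.Icc 1 (m - 1)) ∧
    (∀ i, 1 ≤ i → i ≤ m - 1 → ρ i = (m - i) * nbar % m) ∧
    (∀ i, 1 ≤ i → i ≤ m - 1 → w (ρ i) = u (σ i) - 1) := by
  have hρσ : ∀ i ∈ Set.Icc 1 (m - 1), ρ i * n + i = σ i * m ∧ 0 < σ i ∧ σ i < n := by
    rintro i ⟨hi1, him⟩
    have hσpos : 0 < σ i := hσ i ▸ Nat.mul_inv_mod_pos hmbar hi1 (by omega)
    have hσn : σ i < n := hσ i ▸ Nat.mod_lt _ (by omega)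
    have hcongr : σ i * m ≡ i [MOD n] := hσ i ▸ Nat.mul_inv_mod_mul_modEq hmbar i
    have hle : i ≤ σ i * m := by have := Nat.le_mul_of_pos_left m hσpos; omega
    exact ⟨hρ i ▸ Nat.sub_div_mul_add_of_modEq hcongr hle, hσpos, hσn⟩
  have hmaps : Set.MapsTo ρ (Set.Icc 1 (m - 1)) (Set.Icc 1 (m - 1)) := fun i hi =>
    have ⟨h, hσpos, hσn⟩ := hρσ i hi
    Nat.mem_Icc_of_mul_add_eq h hσpos hσn (by grind)
  refine ⟨?_, fun i hi1 him => ?_, fun i hi1 him => ?_⟩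
  · refine (Set.finite_Icc 1 (m - 1)).injOn_iff_bijOn_of_mapsTo hmaps |>.mp ?_
    intro a ha b hb hab
    exact Nat.eq_of_mul_add_eq_mul (hab ▸ (hρσ a ha).1) (hρσ b hb).1 (by grind) (by grind)
  · exact Nat.eq_mul_inv_mod_of_mul_add_eq (hρσ i ⟨hi1, him⟩).1 hnbar
      (by have := (hmaps ⟨hi1, him⟩).2; omega) (by omega)
  · obtain ⟨h, hσpos, hσn⟩ := hρσ i ⟨hi1, him⟩
    obtain ⟨hUlt, hkU⟩ := hu (σ i) hσn.le
    obtain ⟨hWlt, hkW⟩ := hw (ρ i) ((hmaps ⟨hi1, him⟩).2.trans (Nat.sub_le m 1))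
    refine eq_sub_one_of_forall_lt_le hmono hWlt hUlt (by omega) fun j hj hlt => ?_
    rw [hkU] at hlt
    rw [hkW]
    exact Nat.le_of_dvd_or_dvd_of_lt_of_mul_add_eq h (by omega) (by omega)
      ((hmem _).mpr ⟨j, hj, rfl⟩).1 hlt

/-- With `k` the increasing enumeration of `𝔉(m,n)`,
`u j`, `w j` the indices with `k (u j) = j*m`, `k (w j) = j*n`,
`σ i = [i * m̄]_n` (`m̄` an inverse of `m` mod `n`) and
`ρ i = (σ i * m - i) / n` (an integer):  `ρ` restricts to a bijection of
`{1, …, m-1}` onto itself, in fact `ρ i = [(m - i) * n̄]_m` where `n̄` is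
an inverse of `n` mod `m`, and `w (ρ i) = u (σ i) - 1` for
`1 ≤ i ≤ m-1`. -/
theorem rho_bijection (m n : ℕ) (hm : 2 ≤ m) (hmn : m < n)
    (hcop : Nat.Coprime m n) (k : ℕ → ℕ)
    (hmono : ∀ i j : ℕ, i < j → j < m + n → k i < k j)
    (hmem : ∀ x : ℕ, ((m ∣ x ∨ n ∣ x) ∧ x ≤ m * n) ↔ ∃ i < m + n, k i = x)
    (u w : ℕ → ℕ)
    (hu : ∀ j ≤ n, u j < m + n ∧ k (u j) = j * m)
    (hw : ∀ j ≤ m, w j < m + n ∧ k (w j) = j * n)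
    (mbar : ℕ) (hmbar : m * mbar ≡ 1 [MOD n])
    (σ : ℕ → ℕ) (hσ : ∀ i, σ i = i * mbar % n)
    (ρ : ℕ → ℕ) (hρ : ∀ i, ρ i = (σ i * m - i) / n)
    (nbar : ℕ) (hnbar : n * nbar ≡ 1 [MOD m]) :
    Set.BijOn ρ (Set.Icc 1 (m - 1)) (Set.Icc 1 (m - 1)) ∧
    (∀ i, 1 ≤ i → i ≤ m - 1 → ρ i = (m - i) * nbar % m) ∧
    (∀ i, 1 ≤ i → i ≤ m - 1 → w (ρ i) = u (σ i) - 1) :=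
  rho_bijection_general m n hmn k hmono hmem u w hu hw mbar hmbar σ hσ ρ hρ nbar hnbar
end

section
/- The map j ↦ s_j := [jn]_m is a bijection of {1, 2, …, m−1} onto itself satisfying s_j + s_{m−j} = m, and for every j with 1 ≤ j ≤ m−1 one has m·w_j ≡ −[jn]_m (mod m+n), where w_j = ⌊jn/m⌋ + j. -/
lemma res_ne_zero (m n : ℕ) (hm : 2 ≤ m) (hcop : Nat.Coprime m n)
    (j : ℕ) (h1 : 1 ≤ j) (h2 : j ≤ m - 1) : j * n % m ≠ 0 := by
  intro h
  have hdvd : m ∣ j * n := Nat.dvd_of_mod_eq_zero h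
  have : m ∣ j := (Nat.Coprime.dvd_of_dvd_mul_right hcop hdvd)
  have := Nat.le_of_dvd h1 this
  omega

/-- Let `m, n` be coprime with `2 ≤ m < n`.  The map
`j ↦ s j := [j*n]_m` is a bijection of `{1, …, m-1}` onto itself with
`s j + s (m - j) = m`, and for `1 ≤ j ≤ m-1` one has
`m * w j ≡ -[j*n]_m (mod m+n)`, where `w j = ⌊j*n/m⌋ + j`. -/
theorem s_bijection_and_w_congruence (m n : ℕ) (hm : 2 ≤ m) (hmn : m < n)
    (hcop : Nat.Coprime m n) :
    Set.BijOn (fun j => j * n % m) (Set.Icc 1 (m - 1)) (Set.Icc 1 (m - 1)) ∧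
    (∀ j, 1 ≤ j → j ≤ m - 1 → j * n % m + (m - j) * n % m = m) ∧
    (∀ j, 1 ≤ j → j ≤ m - 1 →
      (m : ℤ) * ((j * n / m + j : ℕ) : ℤ) ≡ -((j * n % m : ℕ) : ℤ) [ZMOD ((m : ℤ) + n)]) := by
  have hm0 : 0 < m := by omega
  have hmaps : Set.MapsTo (fun j => j * n % m) (Set.Icc 1 (m - 1)) (Set.Icc 1 (m - 1)) := by
    intro j hj
    simp only [Set.mem_Icc] at hj ⊢
    have hne := res_ne_zero m n hm hcop j hj.1 hj.2
    have := Nat.mod_lt (j * n) hm0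
    omega
  have hinj : Set.InjOn (fun j => j * n % m) (Set.Icc 1 (m - 1)) := by
    intro a ha b hb hab
    simp only [Set.mem_Icc] at ha hb
    simp only at hab
    have hmod : a % m = b % m :=
      Nat.ModEq.cancel_right_of_coprime hcop (hab : a * n ≡ b * n [MOD m])
    rw [Nat.mod_eq_of_lt (by omega), Nat.mod_eq_of_lt (by omega)] at hmod
    exact hmod
  refine ⟨((Set.finite_Icc _ _).injOn_iff_bijOn_of_mapsTo hmaps).mp hinj, ?_, ?_⟩
  · intro j h1 h2
    have hne := res_ne_zero m n hm hcop j h1 h2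
    have hne' := res_ne_zero m n hm hcop (m - j) (by omega) (by omega)
    have hlt := Nat.mod_lt (j * n) hm0
    have hlt' := Nat.mod_lt ((m - j) * n) hm0
    have hsum : (j * n % m + (m - j) * n % m) % m = 0 := by
      rw [← Nat.add_mod]
      have : j * n + (m - j) * n = n * m := by
        have hj : j + (m - j) = m := by omega
        calc j * n + (m - j) * n = (j + (m - j)) * n := by ring
        _ = n * m := by rw [hj]; ring
      rw [this]; simp
    obtain ⟨k, hk⟩ := Nat.dvd_of_mod_eq_zero hsum
    have hkb : k < 2 := Nat.lt_of_mul_lt_mul_left (a := m) (by omega)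
    have hkp : k ≠ 0 := by rintro rfl; omega
    have hk1 : k = 1 := by omega
    subst hk1
    rw [Nat.mul_one] at hk
    omega
  · intro j h1 h2
    have hdm : m * (j * n / m) + j * n % m = j * n := Nat.div_add_mod (j * n) m
    have key : (m : ℤ) * ((j * n / m : ℕ) : ℤ) + ((j * n % m : ℕ) : ℤ) = (j : ℤ) * n := by
      exact_mod_cast congrArg (Nat.cast : ℕ → ℤ) hdm
    have hdvd : ((m : ℤ) + n) ∣ (-((j * n % m : ℕ) : ℤ) - (m : ℤ) * ((j * n / m + j : ℕ) : ℤ)) := by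
      refine ⟨-(j : ℤ), ?_⟩
      push_cast
      push_cast at key
      linarith
    exact Int.ModEq.symm ((Int.modEq_iff_dvd).mpr (by simpa using hdvd)).symm
end

section
/- Let K be a field and let t, x be nonzero elements of K satisfying Σ_{i=0}^{m+n−1} t^{k_i} x^i = 0. Define the row vector v = [e_1, …, e_{n−1}, f, g_1, …, g_{m−1}] of length m+n−1 by e_i = t^{σ(i)m−i}·x^{u_{σ(i)}} (1 ≤ i ≤ n−1), f = x·e_{n−m}, and g_i = t^{−n}·x^{−1}·e_i (1 ≤ i ≤ m−1). Then v·M(m,n) = x^{−1}·v, where the entries of M(m,n) are evaluated at t. -/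
/-!
Write `s * m = q * n + i` with `0 < i < n` and `s ≤ n`. Then `s = σ(i)`, and below `s * m` the
set `𝔉(m,n)` contains `s` multiples of `m` and `q + 1` multiples of `n`, with `0` counted twice,
so `u_s = s + q` and `e_i = t^(qn) x^(s+q)`. Since `σ(i+m) = σ(i) + 1`, passing from `i` to
`i + m` (resp. `i + m - n`) raises `s` by one and `q` by zero (resp. one), whence
`e_(i+m) = x e_i` and `e_(i+m-n) = t^n x^2 e_i`: these are the columns `m+1, …, m+n-1` of
`v M = x⁻¹ v`, and the columns `1, …, m-1` are immediate. In column `m`, the terms `t^i e_i`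
are the terms of `Σ t^(k_l) x^l` at the positive multiples of `m` below `mn`, the terms
`x⁻¹ e_i` (`i < m`) those at the positive multiples of `n` below `mn`, `t^n x e_(n-m)` the one
at `mn`, and the right-hand side `x⁻¹ e_m = 1` the one at `0`.
-/

open Finset Matrix

theorem card_filter_range_eq_card_filter_Ioc {p : ℕ → Prop} [DecidablePred p] {N : ℕ}
    (h0 : p 0) (hN : p N) : #{y ∈ range N | p y} = #{y ∈ Ioc 0 N | p y} := by
  have hIcc := congrArg (fun s => #(s.filter p)) ((Ico_insert_right N.zero_le).trans
    (Ioc_insert_left N.zero_le).symm)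
  simp only [filter_insert, h0, hN, if_true, Nat.Ico_zero_eq_range] at hIcc
  rwa [card_insert_of_notMem (by simp), card_insert_of_notMem (by simp), add_left_inj] at hIcc

theorem card_filter_dvd_or_dvd_range_mul {a b j : ℕ} (hab : a.Coprime b) (hj0 : 0 < j)
    (hjb : j < b) : #{y ∈ range (j * a) | a ∣ y ∨ b ∣ y} = j + j * a / b := by
  have ha : 0 < a := Nat.pos_of_ne_zero fun h => by simp_all
  have hboth : #{y ∈ Ioc 0 (j * a) | a ∣ y ∧ b ∣ y} = 0 := by
    rw [filter_congr fun y _ => ⟨fun h => hab.mul_dvd_of_dvd_of_dvd h.1 h.2,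
        fun h => ⟨dvd_of_mul_right_dvd h, dvd_of_mul_left_dvd h⟩⟩,
      Nat.Ioc_filter_dvd_card_eq_div]
    exact Nat.div_eq_of_lt (by rw [mul_comm a b]; exact Nat.mul_lt_mul_of_pos_right hjb ha)
  have := card_union_add_card_inter {y ∈ Ioc 0 (j * a) | a ∣ y} {y ∈ Ioc 0 (j * a) | b ∣ y}
  rw [← filter_or, ← filter_and, hboth, Nat.Ioc_filter_dvd_card_eq_div,
    Nat.Ioc_filter_dvd_card_eq_div, Nat.mul_div_cancel _ ha] at this
  rw [card_filter_range_eq_card_filter_Ioc (by simp) (Or.inl (dvd_mul_left a j))]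
  omega

section Enumeration
variable {P : ℕ → Prop} {k : ℕ → ℕ} {B N : ℕ}

theorem card_filter_range_enum_eq [DecidablePred P] (hk : StrictMonoOn k (Set.Iio N))
    (hmem : ∀ y, (P y ∧ y ≤ B) ↔ ∃ i < N, k i = y) {l : ℕ} (hl : l < N) :
    #{y ∈ range (k l) | P y} = l := by
  suffices {y ∈ range (k l) | P y} = (range l).image k by
    rw [this, card_image_of_injOn (hk.injOn.mono fun i hi => ?_), card_range]
    simp only [coe_range, Set.mem_Iio] at hi ⊢
    omega
  ext y
  simp only [mem_filter, mem_range, mem_image]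
  constructor
  · rintro ⟨hy, hPy⟩
    obtain ⟨i, hi, rfl⟩ := (hmem y).mp ⟨hPy, hy.le.trans ((hmem _).mpr ⟨l, hl, rfl⟩).2⟩
    exact ⟨i, (hk.lt_iff_lt hi hl).mp hy, rfl⟩
  · rintro ⟨i, hi, rfl⟩
    exact ⟨(hk.lt_iff_lt (hi.trans hl) hl).mpr hi, ((hmem _).mpr ⟨i, hi.trans hl, rfl⟩).1⟩

theorem enum_last_eq (hk : StrictMonoOn k (Set.Iio N))
    (hmem : ∀ y, (P y ∧ y ≤ B) ↔ ∃ i < N, k i = y) (hB : P B) : k (N - 1) = B := by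
  obtain ⟨l, hl, rfl⟩ := (hmem _).mp ⟨hB, le_rfl⟩
  have hN : N - 1 < N := by omega
  exact le_antisymm ((hmem _).mpr ⟨_, hN, rfl⟩).2 ((hk.le_iff_le hl hN).mpr (by omega))

end Enumeration

theorem mem_image_mul_union_image_mul_iff {m n y : ℕ} (hm : 0 < m) :
    y ∈ (range (n + 1)).image (· * m) ∪ (Ico 1 m).image (· * n) ↔
      (m ∣ y ∨ n ∣ y) ∧ y ≤ m * n := by
  simp only [mem_union, mem_image, mem_range, mem_Ico]
  constructor
  · rintro (⟨j, hj, rfl⟩ | ⟨c, hc, rfl⟩)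
    · refine ⟨Or.inl (dvd_mul_left m j), ?_⟩
      rw [mul_comm m]
      exact Nat.mul_le_mul_right m (by omega)
    · exact ⟨Or.inr (dvd_mul_left n c), Nat.mul_le_mul_right n hc.2.le⟩
  · rintro ⟨hdvd, hle⟩
    by_cases hmy : m ∣ y
    · obtain ⟨j, rfl⟩ := hmy
      exact Or.inl ⟨j, by have := Nat.le_of_mul_le_mul_left hle hm; omega, mul_comm j m⟩
    · obtain ⟨c, rfl⟩ := hdvd.resolve_left hmy
      have hc0 : c ≠ 0 := by rintro rfl; exact hmy (dvd_zero m)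
      have hcm : c ≠ m := by rintro rfl; exact hmy (dvd_mul_left _ _)
      have hn : 0 < n := Nat.pos_of_ne_zero (by rintro rfl; exact hmy (by simp))
      have hcle : c ≤ m := Nat.le_of_mul_le_mul_left (hle.trans_eq (mul_comm m n)) hn
      exact Or.inr ⟨c, ⟨by omega, by omega⟩, mul_comm c n⟩

theorem disjoint_image_mul_image_mul {m n : ℕ} (hcop : m.Coprime n) :
    Disjoint ((range (n + 1)).image (· * m)) ((Ico 1 m).image (· * n)) := by
  simp only [disjoint_left, mem_image, mem_range, mem_Ico, not_exists, not_and]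
  rintro _ ⟨j, -, rfl⟩ c hc hcj
  have := Nat.le_of_dvd (by omega)
    (hcop.dvd_of_dvd_mul_right (⟨j, by rw [hcj, mul_comm]⟩ : m ∣ c * n))
  omega

theorem sum_pow_enum_eq {R : Type*} [CommSemiring R] {m n : ℕ} {k : ℕ → ℕ}
    (hcop : m.Coprime n) (hm : 0 < m) (hmn : m < n) (hk : StrictMonoOn k (Set.Iio (m + n)))
    (hmem : ∀ y, ((m ∣ y ∨ n ∣ y) ∧ y ≤ m * n) ↔ ∃ i < m + n, k i = y) (t x : R) :
    ∑ l ∈ range (m + n), t ^ k l * x ^ l =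
      ∑ j ∈ range n, t ^ (j * m) * x ^ (j + j * m / n) + t ^ (m * n) * x ^ (m + n - 1) +
        ∑ c ∈ Ico 1 m, t ^ (c * n) * x ^ (c + c * n / m) := by
  set F := (range (n + 1)).image (· * m) ∪ (Ico 1 m).image (· * n) with hF
  have hmemF : ∀ y, y ∈ F ↔ (m ∣ y ∨ n ∣ y) ∧ y ≤ m * n := fun y =>
    mem_image_mul_union_image_mul_iff hm
  have hmaps : ∀ l ∈ range (m + n), k l ∈ F := fun l hl =>
    (hmemF _).mpr ((hmem _).mpr ⟨l, mem_range.mp hl, rfl⟩)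
  have hsurj : Set.SurjOn k (range (m + n) : Set ℕ) F := fun y hy => by
    obtain ⟨l, hl, rfl⟩ := (hmem y).mp ((hmemF y).mp hy)
    exact ⟨l, by simpa using hl, rfl⟩
  rw [sum_nbij k hmaps (by simpa using hk.injOn) hsurj
      (g := fun y => t ^ y * x ^ #{z ∈ range y | m ∣ z ∨ n ∣ z})
      (fun l hl => by rw [card_filter_range_enum_eq hk hmem (mem_range.mp hl)]),
    hF, sum_union (disjoint_image_mul_image_mul hcop),
    sum_image (fun _ _ _ _ h => Nat.eq_of_mul_eq_mul_right hm h),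
    sum_image (fun _ _ _ _ h => Nat.eq_of_mul_eq_mul_right (by omega) h), sum_range_succ]
  have hjm : ∀ j ∈ range n, #{z ∈ range (j * m) | m ∣ z ∨ n ∣ z} = j + j * m / n := by
    intro j hj
    rcases Nat.eq_zero_or_pos j with rfl | hj0
    · simp
    · exact card_filter_dvd_or_dvd_range_mul hcop hj0 (mem_range.mp hj)
  have hcn : ∀ c ∈ Ico 1 m, #{z ∈ range (c * n) | m ∣ z ∨ n ∣ z} = c + c * n / m := by
    intro c hc
    rw [filter_congr fun z _ => or_comm]
    exact card_filter_dvd_or_dvd_range_mul hcop.symm (mem_Ico.mp hc).1 (mem_Ico.mp hc).2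
  have hnm : #{z ∈ range (n * m) | m ∣ z ∨ n ∣ z} = m + n - 1 := by
    rw [mul_comm, ← enum_last_eq hk hmem (Or.inl (dvd_mul_right m n))]
    exact card_filter_range_enum_eq hk hmem (by omega)
  rw [sum_congr rfl fun j hj => by rw [hjm j hj],
    sum_congr rfl fun c (hc : c ∈ Ico 1 m) => by rw [hcn c hc], hnm, mul_comm n m]

theorem mul_mod_pos {a b c : ℕ} (hab : a.Coprime b) (hc0 : 0 < c) (hcb : c < b) :
    0 < c * a % b := by
  refine Nat.pos_of_ne_zero fun h => ?_
  have := Nat.le_of_dvd hc0 (hab.symm.dvd_of_dvd_mul_right (Nat.dvd_of_mod_eq_zero h))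
  omega

theorem sum_Ico_one_mul_mod {M : Type*} [AddCommMonoid M] {a b : ℕ} (hab : a.Coprime b)
    (f : ℕ → M) : ∑ c ∈ Ico 1 b, f (c * a % b) = ∑ i ∈ Ico 1 b, f i := by
  have hmaps : Set.MapsTo (· * a % b) (Ico 1 b : Set ℕ) (Ico 1 b) := by
    intro c hc
    simp only [coe_Ico, Set.mem_Ico] at hc ⊢
    exact ⟨mul_mod_pos hab hc.1 hc.2, Nat.mod_lt _ (by omega)⟩
  have hinj : Set.InjOn (· * a % b) (Ico 1 b : Set ℕ) := by
    intro c hc c' hc' h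
    simp only [coe_Ico, Set.mem_Ico] at hc hc'
    have := Nat.ModEq.cancel_right_of_coprime (Nat.coprime_comm.mp hab) h
    rwa [Nat.ModEq, Nat.mod_eq_of_lt hc.2, Nat.mod_eq_of_lt hc'.2] at this
  exact sum_nbij _ hmaps hinj (surjOn_of_injOn_of_card_le _ hmaps hinj le_rfl) fun _ _ => rfl

theorem mod_eq_of_mul_inv {m n mbar i j : ℕ} (hmbar : m * mbar ≡ 1 [MOD n]) (hj : j < n)
    (h : j * m ≡ i [MOD n]) : i * mbar % n = j := by
  have : i * mbar ≡ j [MOD n] := calc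
    i * mbar ≡ j * m * mbar [MOD n] := h.symm.mul_right mbar
    _ = j * (m * mbar) := mul_assoc ..
    _ ≡ j * 1 [MOD n] := hmbar.mul_left j
    _ = j := mul_one j
  rw [this, Nat.mod_eq_of_lt hj]

theorem exists_mul_eq_mul_add {m n mbar i : ℕ} (hmbar : m * mbar ≡ 1 [MOD n]) (hi : i < n) :
    ∃ s < n, ∃ q, s * m = q * n + i := by
  refine ⟨i * mbar % n, Nat.mod_lt _ (by omega), i * mbar % n * m / n, ?_⟩
  have hmod : i * mbar % n * m % n = i := calc
    i * mbar % n * m % n = i * (m * mbar) % n := by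
      rw [Nat.mod_mul_mod, mul_assoc, mul_comm mbar]
    _ = i := by rw [Nat.mul_mod, hmbar, ← Nat.mul_mod, mul_one, Nat.mod_eq_of_lt hi]
  conv_lhs => rw [← Nat.div_add_mod (i * mbar % n * m) n, hmod, mul_comm]

theorem u_eq_add_div {m n : ℕ} {k u : ℕ → ℕ} (hcop : m.Coprime n)
    (hk : StrictMonoOn k (Set.Iio (m + n)))
    (hmem : ∀ y, ((m ∣ y ∨ n ∣ y) ∧ y ≤ m * n) ↔ ∃ i < m + n, k i = y)
    (hu : ∀ j ≤ n, u j < m + n ∧ k (u j) = j * m) {j : ℕ} (hj0 : 0 < j) (hjn : j < n) :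
    u j = j + j * m / n := by
  obtain ⟨hlt, hkj⟩ := hu j hjn.le
  rw [← card_filter_range_enum_eq hk hmem hlt, hkj, card_filter_dvd_or_dvd_range_mul hcop hj0 hjn]

def HasDivisionForm {M : Type*} [Monoid M] (m n : ℕ) (t x : M) (e : ℕ → M) : Prop :=
  ∀ s q i, s ≤ n → 0 < i → i < n → s * m = q * n + i → e i = t ^ (q * n) * x ^ (s + q)

-- Indices are 0-based: entry `(i, j)` of `matrixM` and entry `i` of `rowVector` are the paper's
-- entries `(i + 1, j + 1)` and `i + 1`.
def matrixM {R : Type*} [Ring R] (m n : ℕ) (t : R) :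
    Matrix (Fin (m + n - 1)) (Fin (m + n - 1)) R :=
  Matrix.of fun i j =>
    if i.val + 1 ≤ n - 1 then
      (if j.val + 1 = m then -t ^ (i.val + 1)
       else if j.val + 1 = m + (i.val + 1) then 1 else 0)
    else if i.val + 1 = n then
      (if j.val + 1 = m then -t ^ n else 0)
    else
      (if j.val + 1 = i.val + 1 - n then t ^ n
       else if j.val + 1 = m then -t ^ n else 0)

def rowVector {K : Type*} [DivisionRing K] (m n : ℕ) (t x : K) (e : ℕ → K) :
    Fin (m + n - 1) → K := fun i =>
  if i.val + 1 ≤ n - 1 then e (i.val + 1)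
  else if i.val + 1 = n then x * e (n - m)
  else t⁻¹ ^ n * x⁻¹ * e (i.val + 1 - n)

section MatrixM
variable {R : Type*} [Ring R] {m n : ℕ} (t : R) (w : Fin (m + n - 1) → R)

theorem vecMul_matrixM_of_lt {j : Fin (m + n - 1)} (hj : j.val + 1 < m) :
    (w ᵥ* matrixM m n t) j = w ⟨n + j, by omega⟩ * t ^ n := by
  rw [vecMul, dotProduct, sum_eq_single_of_mem ⟨n + j, by omega⟩ (mem_univ _)]
  · simp only [matrixM, of_apply]
    split_ifs <;> first | rfl | omega
  · intro i _ hi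
    have : i.val ≠ n + j := fun h => hi (Fin.ext h)
    simp only [matrixM, of_apply]
    split_ifs <;> first | exact mul_zero _ | omega

theorem vecMul_matrixM_of_gt {j : Fin (m + n - 1)} (hj : m < j.val + 1) :
    (w ᵥ* matrixM m n t) j = w ⟨j - m, by omega⟩ := by
  rw [vecMul, dotProduct, sum_eq_single_of_mem ⟨j - m, by omega⟩ (mem_univ _)]
  · simp only [matrixM, of_apply]
    split_ifs <;> first | exact mul_one _ | omega
  · intro i _ hi
    have : i.val ≠ j - m := fun h => hi (Fin.ext h)
    simp only [matrixM, of_apply]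
    split_ifs <;> first | exact mul_zero _ | omega

theorem vecMul_matrixM_self {j : Fin (m + n - 1)} (hj : j.val + 1 = m) :
    (w ᵥ* matrixM m n t) j = -∑ i, w i * t ^ min (i.val + 1) n := by
  rw [vecMul, dotProduct, ← sum_neg_distrib]
  refine sum_congr rfl fun i _ => ?_
  rw [← mul_neg]
  congr 1
  simp only [matrixM, of_apply]
  split_ifs <;> first | omega | rw [min_eq_right (by omega)] | rw [min_eq_left (by omega)]

end MatrixM

section RowVector
variable {K : Type*} [Field K] {m n : ℕ} {t x : K} {e : ℕ → K}

theorem hasDivisionForm {mbar : ℕ} {σ u : ℕ → ℕ} (hmbar : m * mbar ≡ 1 [MOD n])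
    (hσ : ∀ i, σ i = i * mbar % n) (hu : ∀ j, 0 < j → j < n → u j = j + j * m / n)
    (he : ∀ i, e i = t ^ (σ i * m - i) * x ^ (u (σ i))) : HasDivisionForm m n t x e := by
  intro s q i hs hi0 hin hsm
  have hn : 0 < n := by omega
  have hmod : s * m % n = i := by rw [hsm, Nat.mul_add_mod_self_right, Nat.mod_eq_of_lt hin]
  have hsn : s < n := hs.lt_of_ne fun h => by simp [h, Nat.mul_mod_right] at hmod; omega
  have hs0 : 0 < s := Nat.pos_of_ne_zero fun h => by simp [h] at hmod; omega
  have hq : s * m / n = q := by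
    rw [hsm, add_comm, Nat.add_mul_div_right _ _ hn, Nat.div_eq_of_lt hin, zero_add]
  have hσi : σ i = s := by
    rw [hσ, mod_eq_of_mul_inv hmbar hsn (hmod.trans (Nat.mod_eq_of_lt hin).symm)]
  rw [he, hσi, hu s hs0 hsn, hq, hsm, Nat.add_sub_cancel]

theorem e_add_eq {mbar : ℕ} (hmbar : m * mbar ≡ 1 [MOD n]) (he : HasDivisionForm m n t x e)
    {i : ℕ} (hi0 : 0 < i) (him : i + m < n) : e (i + m) = x * e i := by
  obtain ⟨s, hsn, q, hsm⟩ := exists_mul_eq_mul_add hmbar (by omega : i < n)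
  rw [he (s + 1) q (i + m) (by omega) (by omega) him (by linarith),
    he s q i hsn.le hi0 (by omega) hsm]
  ring

theorem e_add_sub_eq {mbar : ℕ} (hmbar : m * mbar ≡ 1 [MOD n]) (he : HasDivisionForm m n t x e)
    (hmn : m ≤ n) {i : ℕ} (hin : i < n) (hni : n < i + m) :
    e (i + m - n) = t ^ n * x ^ 2 * e i := by
  obtain ⟨s, hsn, q, hsm⟩ := exists_mul_eq_mul_add hmbar hin
  obtain ⟨r, hr⟩ : ∃ r, i + m = n + r := ⟨i + m - n, by omega⟩
  rw [show i + m - n = r by omega, he (s + 1) (q + 1) r (by omega) (by omega) (by omega)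
    (by linarith), he s q i hsn.le (by omega) hin hsm]
  ring

theorem sum_Ico_pow_mul_e_eq (hcop : m.Coprime n) (he : HasDivisionForm m n t x e) :
    ∑ i ∈ Ico 1 n, t ^ i * e i = ∑ j ∈ Ico 1 n, t ^ (j * m) * x ^ (j + j * m / n) := by
  rw [← sum_Ico_one_mul_mod hcop]
  refine sum_congr rfl fun j hj => ?_
  obtain ⟨hj0, hjn⟩ := mem_Ico.mp hj
  rw [he j (j * m / n) (j * m % n) hjn.le (mul_mod_pos hcop hj0 hjn) (Nat.mod_lt _ (by omega))
    (Nat.div_add_mod' _ _).symm, ← mul_assoc, ← pow_add, Nat.mod_add_div']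

theorem sum_Ico_e_eq (hcop : m.Coprime n) (hmn : m < n) (he : HasDivisionForm m n t x e) :
    ∑ i ∈ Ico 1 m, e i = x * ∑ c ∈ Ico 1 m, t ^ (c * n) * x ^ (c + c * n / m) := by
  have hreflect := sum_Ico_reflect e 1 (Nat.le_succ m)
  rw [Nat.add_sub_cancel, Nat.add_sub_cancel_left] at hreflect
  rw [← hreflect, ← sum_Ico_one_mul_mod hcop.symm, mul_sum]
  refine sum_congr rfl fun c hc => ?_
  obtain ⟨hc0, hcm⟩ := mem_Ico.mp hc
  have hr := Nat.mod_lt (c * n) (by omega : 0 < m)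
  have hdiv : c * n / m < n := Nat.div_lt_of_lt_mul (by nlinarith)
  have hsm : (c * n / m + 1) * m = c * n + (m - c * n % m) := by
    have := Nat.div_add_mod (c * n) m
    rw [add_one_mul, mul_comm]
    omega
  rw [he (c * n / m + 1) c (m - c * n % m) hdiv (by omega) (by omega) hsm]
  ring

theorem sum_rowVector_mul_pow_min (ht : t ≠ 0) (hm : 0 < m) (hmn : m < n) :
    ∑ i, rowVector m n t x e i * t ^ min (i.val + 1) n =
      ∑ i ∈ Ico 1 n, t ^ i * e i + t ^ n * (x * e (n - m)) +
        x⁻¹ * ∑ i ∈ Ico 1 m, e i := by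
  set g : ℕ → K := fun I =>
    if I < n then t ^ I * e I else if I = n then t ^ n * (x * e (n - m)) else x⁻¹ * e (I - n)
  have hg : ∀ i : Fin (m + n - 1),
      rowVector m n t x e i * t ^ min (i.val + 1) n = g (i + 1) := by
    intro i
    simp only [rowVector, g]
    split_ifs <;> first | omega | skip
    · rw [min_eq_left (by omega), mul_comm]
    · rw [min_eq_right (by omega), mul_comm]
    · rw [min_eq_right (by omega), inv_pow]
      field_simp
  have hlow : ∑ i ∈ Ico 1 n, g i = ∑ i ∈ Ico 1 n, t ^ i * e i :=
    sum_congr rfl fun i hi => if_pos (mem_Ico.mp hi).2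
  have hhigh : ∑ i ∈ Ico (1 + n) (m + n), g i = x⁻¹ * ∑ i ∈ Ico 1 m, e i := by
    rw [← sum_Ico_add', mul_sum]
    refine sum_congr rfl fun i hi => ?_
    have := (mem_Ico.mp hi).1
    simp only [g, if_neg (by omega : ¬ i + n < n), if_neg (by omega : i + n ≠ n),
      Nat.add_sub_cancel]
  rw [sum_congr rfl fun i _ => hg i, Fin.sum_univ_eq_sum_range (fun I => g (I + 1)),
    range_eq_Ico, sum_Ico_add', zero_add, show m + n - 1 + 1 = m + n by omega,
    ← sum_Ico_consecutive g (by omega : 1 ≤ n) (by omega : n ≤ m + n),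
    sum_eq_sum_Ico_succ_bot (by omega : n < m + n), add_comm n 1, hlow, hhigh, ← add_assoc]
  simp [g]

theorem vecMul_rowVector_of_lt (ht : t ≠ 0) (hmn : m < n) {j : Fin (m + n - 1)}
    (hj : j.val + 1 < m) :
    (rowVector m n t x e ᵥ* matrixM m n t) j = x⁻¹ * rowVector m n t x e j := by
  rw [vecMul_matrixM_of_lt _ _ hj]
  simp only [rowVector, if_neg (by omega : ¬ n + j.val + 1 ≤ n - 1),
    if_neg (by omega : n + j.val + 1 ≠ n), if_pos (by omega : j.val + 1 ≤ n - 1),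
    show n + j.val + 1 - n = j.val + 1 by omega, inv_pow]
  field_simp

theorem vecMul_rowVector_of_gt {mbar : ℕ} (hmbar : m * mbar ≡ 1 [MOD n])
    (he : HasDivisionForm m n t x e) (ht : t ≠ 0) (hx : x ≠ 0) (hmn : m < n)
    {j : Fin (m + n - 1)} (hj : m < j.val + 1) :
    (rowVector m n t x e ᵥ* matrixM m n t) j = x⁻¹ * rowVector m n t x e j := by
  rw [vecMul_matrixM_of_gt _ _ hj]
  simp only [rowVector, if_pos (by omega : j.val - m + 1 ≤ n - 1)]
  split_ifs
  · rw [show j.val + 1 = j.val - m + 1 + m by omega, e_add_eq hmbar he (by omega) (by omega)]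
    field_simp
  · rw [show j.val - m + 1 = n - m by omega]
    field_simp
  · rw [show j.val + 1 - n = j.val - m + 1 + m - n by omega,
      e_add_sub_eq hmbar he hmn.le (by omega) (by omega), inv_pow]
    field_simp

theorem vecMul_rowVector_self (hcop : m.Coprime n) (he : HasDivisionForm m n t x e)
    (hroot : ∑ j ∈ range n, t ^ (j * m) * x ^ (j + j * m / n) + t ^ (m * n) * x ^ (m + n - 1) +
      ∑ c ∈ Ico 1 m, t ^ (c * n) * x ^ (c + c * n / m) = 0)
    (ht : t ≠ 0) (hx : x ≠ 0) (hm : 0 < m) (hmn : m < n) {j : Fin (m + n - 1)}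
    (hj : j.val + 1 = m) :
    (rowVector m n t x e ᵥ* matrixM m n t) j = x⁻¹ * rowVector m n t x e j := by
  have hem : e m = x := by simpa using he 1 0 m (by omega) hm hmn (by simp)
  have hlast : t ^ n * (x * e (n - m)) = t ^ (m * n) * x ^ (m + n - 1) := by
    rw [he (n - 1) (m - 1) (n - m) (by omega) (by omega) (by omega)
        (by zify [(by omega : 1 ≤ m), (by omega : 1 ≤ n), hmn.le]; ring),
      show m * n = (m - 1) * n + n by
        rw [Nat.sub_one_mul, Nat.sub_add_cancel (Nat.le_mul_of_pos_left n hm)],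
      show m + n - 1 = n - 1 + (m - 1) + 1 by omega]
    ring
  rw [sum_range_eq_add_Ico _ (by omega), ← sum_Ico_pow_mul_e_eq hcop he, ← hlast] at hroot
  simp only [zero_mul, Nat.zero_div, add_zero, pow_zero, mul_one] at hroot
  rw [vecMul_matrixM_self _ _ hj, sum_rowVector_mul_pow_min ht hm hmn, sum_Ico_e_eq hcop hmn he]
  simp only [rowVector, if_pos (by omega : j.val + 1 ≤ n - 1)]
  rw [hj, hem]
  field_simp
  linear_combination -hroot

theorem vecMul_rowVector_matrixM {mbar : ℕ} (hcop : m.Coprime n)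
    (hmbar : m * mbar ≡ 1 [MOD n]) (he : HasDivisionForm m n t x e)
    (hroot : ∑ j ∈ range n, t ^ (j * m) * x ^ (j + j * m / n) + t ^ (m * n) * x ^ (m + n - 1) +
      ∑ c ∈ Ico 1 m, t ^ (c * n) * x ^ (c + c * n / m) = 0)
    (ht : t ≠ 0) (hx : x ≠ 0) (hm : 0 < m) (hmn : m < n) :
    rowVector m n t x e ᵥ* matrixM m n t = x⁻¹ • rowVector m n t x e := by
  ext j
  rw [Pi.smul_apply, smul_eq_mul]
  rcases lt_trichotomy (j.val + 1) m with hj | hj | hj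
  · exact vecMul_rowVector_of_lt ht hmn hj
  · exact vecMul_rowVector_self hcop he hroot ht hx hm hmn hj
  · exact vecMul_rowVector_of_gt hmbar he ht hx hmn hj

end RowVector

/-- Let `k` be the increasing enumeration of `𝔉(m,n)`,
`u j` the index with `k (u j) = j*m`, and `σ i = [i*m̄]_n`.  Let `K` be a
field and `t, x ∈ K \ {0}` with `Σ_{i<m+n} t^{k i} x^i = 0`.  Let
`M(m,n)` be the `(m+n-1) × (m+n-1)` matrix (with `1`-based indices `I, J`):
row `I` (`1 ≤ I ≤ n-1`) has `-t^I` in column `m` and `1` in column `m+I`;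
row `n` has `-t^n` in column `m`; row `n+i` (`1 ≤ i ≤ m-1`) has `t^n` in
column `i` and `-t^n` in column `m`; all other entries vanish.  Let `v`
be the row vector `[e 1, …, e (n-1), x * e (n-m), t⁻¹^n * x⁻¹ * e 1, …,
t⁻¹^n * x⁻¹ * e (m-1)]` where `e i = t^(σ i * m - i) * x^(u (σ i))`.
Then `v * M(m,n) = x⁻¹ • v`. -/
theorem row_vector_eigen (m n : ℕ) (hm : 2 ≤ m) (hmn : m < n)
    (hcop : Nat.Coprime m n) (k : ℕ → ℕ)
    (hmono : ∀ i j : ℕ, i < j → j < m + n → k i < k j)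
    (hmem : ∀ x : ℕ, ((m ∣ x ∨ n ∣ x) ∧ x ≤ m * n) ↔ ∃ i < m + n, k i = x)
    (u : ℕ → ℕ)
    (hu : ∀ j ≤ n, u j < m + n ∧ k (u j) = j * m)
    (mbar : ℕ) (hmbar : m * mbar ≡ 1 [MOD n])
    (σ : ℕ → ℕ) (hσ : ∀ i, σ i = i * mbar % n)
    (K : Type*) [Field K] (t x : K) (ht : t ≠ 0) (hx : x ≠ 0)
    (hroot : ∑ i ∈ Finset.range (m + n), t ^ (k i) * x ^ i = 0)
    (e : ℕ → K) (he : ∀ i, e i = t ^ (σ i * m - i) * x ^ (u (σ i)))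
    (M : Matrix (Fin (m + n - 1)) (Fin (m + n - 1)) K)
    (hM : ∀ i j : Fin (m + n - 1), M i j =
      if i.val + 1 ≤ n - 1 then
        (if j.val + 1 = m then -t ^ (i.val + 1)
         else if j.val + 1 = m + (i.val + 1) then 1 else 0)
      else if i.val + 1 = n then
        (if j.val + 1 = m then -t ^ n else 0)
      else
        (if j.val + 1 = i.val + 1 - n then t ^ n
         else if j.val + 1 = m then -t ^ n else 0))
    (v : Fin (m + n - 1) → K)
    (hv : ∀ i : Fin (m + n - 1), v i =
      if i.val + 1 ≤ n - 1 then e (i.val + 1)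
      else if i.val + 1 = n then x * e (n - m)
      else t⁻¹ ^ n * x⁻¹ * e (i.val + 1 - n)) :
    Matrix.vecMul v M = x⁻¹ • v := by
  have hm0 : 0 < m := by omega
  have hk : StrictMonoOn k (Set.Iio (m + n)) := fun i _ j hj h => hmono i j h hj
  obtain rfl : M = matrixM m n t := Matrix.ext hM
  obtain rfl : v = rowVector m n t x e := funext hv
  have he' : HasDivisionForm m n t x e :=
    hasDivisionForm hmbar hσ (fun j => u_eq_add_div hcop hk hmem hu) he
  rw [sum_pow_enum_eq hcop hm0 hmn hk hmem] at hroot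
  exact vecMul_rowVector_matrixM hcop hmbar he' hroot ht hx hm0 hmn
end

section
/- In the polynomial ring ℤ[t, x], det(I_{m+n−1} − x·M(m,n)) = Σ_{i=0}^{m+n−1} t^{k_i} x^i. -/
/-!
Write `M(m,n) = S - c eₘᵀ`, where `c = (t^min(q,n))_q` is minus the column `m` of `M`. Row `q`
of `S` sends position `q` to `q + m` with weight `1` if `q < n`, to `q - n` with weight `tⁿ` if
`q > n`, and row `n` is zero. Started at `m`, this walk merges the multiples of `m` and of `n`:
after listing `k_j` it stands at `walkPos m n (k_j)`, the next multiple of `m` after `k_j` minus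
the last multiple of `n` up to `k_j`, and has collected the weight `t^(n⌊k_j/n⌋)`. By coprimality
these `m + n - 1` positions are distinct, and the walk dies at `n` once the next element is `mn`;
so `S` is nilpotent, `det(1 - xS) = 1` and `(1 - xS)⁻¹ = Σ xʲSʲ`. The matrix determinant lemma
then gives `det(1 - xM) = 1 + Σⱼ x^(j+1) eₘᵀ Sʲ c`, and
`eₘᵀ Sʲ c = t^(n⌊k_j/n⌋) t^min(walkPos m n (k_j), n) = t^(k_(j+1))`.
-/

open Polynomial Matrix Finset

namespace Matrix

section Walk

variable {ι R : Type*} [Fintype ι] [DecidableEq ι] [CommSemiring R]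
  {S : Matrix ι ι R} {p : ℕ → ι} {w : ℕ → R} {L : ℕ}

theorem single_one_vecMul_pow_of_row_eq
    (hS : ∀ j, j + 1 < L → S (p j) = w j • Pi.single (p (j + 1)) 1) {j l : ℕ} (hl : j + l < L) :
    Pi.single (p j) 1 ᵥ* S ^ l = (∏ i ∈ Ico j (j + l), w i) • Pi.single (p (j + l)) 1 := by
  induction l with
  | zero => simp
  | succ l ih =>
    rw [pow_succ, ← vecMul_vecMul, ih (by omega), smul_vecMul, single_one_vecMul, row,
      hS _ (by omega), smul_smul, ← add_assoc, prod_Ico_succ_top (by omega)]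

theorem pow_eq_zero_of_row_eq (hS : ∀ j, j + 1 < L → S (p j) = w j • Pi.single (p (j + 1)) 1)
    (hlast : S (p (L - 1)) = 0) (hp : ∀ q, ∃ j < L, p j = q) : S ^ L = 0 := by
  ext q c
  obtain ⟨j, hj, rfl⟩ := hp q
  have hL : S ^ L = S ^ (L - 1 - j) * S * S ^ j := by
    rw [← pow_succ, ← pow_add]
    congr 1
    omega
  have hrow := single_one_vecMul_pow_of_row_eq hS (j := j) (l := L - 1 - j) (by omega)
  rw [show j + (L - 1 - j) = L - 1 by omega] at hrow
  have hzero : Pi.single (p j) 1 ᵥ* S ^ L = 0 := by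
    rw [hL, ← vecMul_vecMul, ← vecMul_vecMul, hrow, smul_vecMul, single_one_vecMul, row, hlast,
      smul_zero, zero_vecMul]
  simpa using congrFun hzero c

end Walk

section Nilpotent

variable {ι R : Type*} [Fintype ι] [DecidableEq ι] [CommRing R] [IsReduced R]

theorem charpoly_eq_X_pow_of_isNilpotent {S : Matrix ι ι R} (hS : IsNilpotent S) :
    S.charpoly = X ^ Fintype.card ι :=
  sub_eq_zero.mp <| Polynomial.ext fun i =>
    (Polynomial.isNilpotent_iff.mp (isNilpotent_charpoly_sub_pow_of_isNilpotent hS) i).eq_zero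

theorem charpolyRev_eq_one_of_isNilpotent {S : Matrix ι ι R} (hS : IsNilpotent S) :
    S.charpolyRev = 1 := by
  rw [← reverse_charpoly, charpoly_eq_X_pow_of_isNilpotent hS, ← one_mul (X ^ _),
    reverse_mul_X_pow, ← C_1, reverse_C]

theorem charpolyRev_sub_replicateCol_mul_replicateRow {S : Matrix ι ι R} {N : ℕ}
    (hS : S ^ N = 0) (u v : ι → R) :
    (S - replicateCol Unit u * replicateRow Unit v).charpolyRev =
      1 + ∑ j ∈ range N, C (v ⬝ᵥ (S ^ j *ᵥ u)) * X ^ (j + 1) := by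
  set A : Matrix ι ι R[X] := (X : R[X]) • S.map C
  set G := ∑ j ∈ range N, A ^ j
  have hA : A ^ N = 0 := by
    rw [_root_.smul_pow, ← Matrix.map_pow, hS, Matrix.map_zero _ (map_zero C), smul_zero]
  have hAG : (1 - A) * G = 1 := by rw [mul_neg_geom_sum, hA, sub_zero]
  have hsplit : 1 - (X : R[X]) • (S - replicateCol Unit u * replicateRow Unit v).map C =
      (1 - A) * (1 + replicateCol Unit (G *ᵥ ((X : R[X]) • (C ∘ u))) *
        replicateRow Unit (C ∘ v)) := by
    rw [Matrix.mul_add, Matrix.mul_one, ← Matrix.mul_assoc, ← replicateCol_mulVec, mulVec_mulVec,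
      hAG, one_mulVec]
    ext i j : 1
    simp [A, Matrix.mul_apply]
    ring
  have hdet : (1 - A).det = 1 := charpolyRev_eq_one_of_isNilpotent ⟨N, hS⟩
  rw [charpolyRev, hsplit, det_mul, hdet, one_mul, det_one_add_replicateCol_mul_replicateRow]
  simp only [G, A, sum_mulVec, dotProduct_sum, add_right_inj]
  refine sum_congr rfl fun j _ => ?_
  have hcomp : C ∘ (S ^ j *ᵥ u) = (S ^ j).map C *ᵥ (C ∘ u) := funext (RingHom.map_mulVec C _ u)
  rw [_root_.smul_pow, ← Matrix.map_pow, smul_mulVec, mulVec_smul, dotProduct_smul,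
    dotProduct_smul, ← hcomp, ← RingHom.map_dotProduct, smul_eq_mul, smul_eq_mul, pow_succ]
  ring

end Nilpotent

end Matrix

section Enumeration

variable {k : ℕ → ℕ} {L : ℕ} {s : Set ℕ}

theorem enum_zero_le (hs : ∀ x, x ∈ s ↔ ∃ i < L, k i = x) (hk : StrictMonoOn k (Set.Iio L))
    {y : ℕ} (hy : y ∈ s) : k 0 ≤ y := by
  obtain ⟨i, hi, rfl⟩ := (hs y).1 hy
  exact (hk.le_iff_le (show 0 < L by omega) hi).2 i.zero_le

theorem le_enum_pred (hs : ∀ x, x ∈ s ↔ ∃ i < L, k i = x) (hk : StrictMonoOn k (Set.Iio L))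
    {y : ℕ} (hy : y ∈ s) : y ≤ k (L - 1) := by
  obtain ⟨i, hi, rfl⟩ := (hs y).1 hy
  exact (hk.le_iff_le hi (show L - 1 < L by omega)).2 (by omega)

theorem enum_succ_le (hs : ∀ x, x ∈ s ↔ ∃ i < L, k i = x) (hk : StrictMonoOn k (Set.Iio L))
    {j y : ℕ} (hj : j + 1 < L) (hy : y ∈ s) (hjy : k j < y) : k (j + 1) ≤ y := by
  obtain ⟨i, hi, rfl⟩ := (hs y).1 hy
  exact (hk.le_iff_le hj hi).2 ((hk.lt_iff_lt (show j < L by omega) hi).1 hjy)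

end Enumeration

theorem prod_range_pow_tsub {M : Type*} [CommMonoid M] (a : M) {f : ℕ → ℕ} {l : ℕ}
    (hf : MonotoneOn f (Set.Iic l)) :
    ∏ i ∈ range l, a ^ (f (i + 1) - f i) = a ^ (f l - f 0) := by
  induction l with
  | zero => simp
  | succ l ih =>
    have h₀ : f 0 ≤ f l := hf (by simp) (by simp) l.zero_le
    have h₁ : f l ≤ f (l + 1) := hf (by simp) (by simp) l.le_succ
    rw [prod_range_succ, ih (hf.mono (Set.Iic_subset_Iic.2 l.le_succ)), ← pow_add]
    congr 1
    omega

namespace Nat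

theorem div_mul_add_le_of_dvd_of_lt {m x y : ℕ} (hm : 0 < m) (hy : m ∣ y) (hxy : x < y) :
    x / m * m + m ≤ y := by
  obtain ⟨c, rfl⟩ := hy
  have : x / m < c := (Nat.div_lt_iff_lt_mul hm).2 (by linarith [mul_comm m c])
  nlinarith

theorem div_eq_of_le_of_lt_add {n q y : ℕ} (h₁ : q * n ≤ y) (h₂ : y < q * n + n) : y / n = q :=
  Nat.div_eq_of_lt_le h₁ (by rwa [add_mul, one_mul])

end Nat

/-- The set `𝔉(m,n)`. -/
def multSet (m n : ℕ) : Set ℕ := {x | (m ∣ x ∨ n ∣ x) ∧ x ≤ m * n}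

def walkPos (m n x : ℕ) : ℕ := x / m * m + m - x / n * n

/-- The matrix `S`, with `0`-based indices: row `i` is the position `i + 1`. -/
noncomputable def walkMatrix (m n : ℕ) : Matrix (Fin (m + n - 1)) (Fin (m + n - 1)) ℤ[X] :=
  of fun i j => if i.val + 1 < n ∧ j.val = i.val + m then 1
    else if n < i.val + 1 ∧ j.val + n = i.val then X ^ n else 0

noncomputable def walkCol (m n : ℕ) : Fin (m + n - 1) → ℤ[X] := fun i => X ^ min (i.val + 1) n

/-- The index of the position `q`; only meaningful for `1 ≤ q ≤ m + n - 1`. -/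
def posIdx (m n q : ℕ) [NeZero (m + n - 1)] : Fin (m + n - 1) := Fin.ofNat _ (q - 1)

section Positions

variable {m n : ℕ}

theorem walkPos_pos (hm : 0 < m) (x : ℕ) : 0 < walkPos m n x := by
  have := Nat.div_mul_le_self x n
  have := Nat.lt_div_mul_add (a := x) hm
  unfold walkPos
  omega

theorem walkPos_le (hn : 0 < n) (x : ℕ) : walkPos m n x ≤ m + n - 1 := by
  have := Nat.div_mul_le_self x m
  have := Nat.lt_div_mul_add (a := x) hn
  unfold walkPos
  omega

theorem walkPos_ne (hm : 0 < m) (hn : 0 < n) (hcop : m.Coprime n) {x y : ℕ} (hxy : x < y)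
    (hy : m ∣ y ∨ n ∣ y) (hymn : y < m * n) : walkPos m n x ≠ walkPos m n y := by
  intro h
  have := Nat.div_mul_le_self x m
  have := Nat.div_mul_le_self x n
  have := Nat.lt_div_mul_add (a := x) hm
  have := Nat.lt_div_mul_add (a := y) hn
  have hm_le : x / m ≤ y / m := Nat.div_le_div_right hxy.le
  have hn_le : x / n ≤ y / n := Nat.div_le_div_right hxy.le
  have := Nat.mul_le_mul_right m hm_le
  have := Nat.mul_le_mul_right n hn_le
  have hdiff : (y / m - x / m) * m = (y / n - x / n) * n := by
    rw [Nat.sub_mul, Nat.sub_mul]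
    unfold walkPos at h
    omega
  -- `m (y/m - x/m) = n (y/n - x/n)` with `y/m - x/m < n`: by coprimality both differences vanish,
  -- so no multiple of `m` or `n` lies in `(x, y]`.
  have hdvd : n ∣ y / m - x / m :=
    hcop.symm.dvd_of_dvd_mul_right ⟨y / n - x / n, by rw [hdiff, mul_comm]⟩
  have hlt : y / m < n := (Nat.div_lt_iff_lt_mul hm).2 (by rwa [mul_comm])
  have hmeq : y / m = x / m := by
    have := Nat.eq_zero_of_dvd_of_lt hdvd ((Nat.sub_le _ _).trans_lt hlt)
    omega
  have hneq : y / n = x / n := by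
    rw [hmeq, Nat.sub_self, zero_mul] at hdiff
    have := (Nat.mul_eq_zero.1 hdiff.symm).resolve_right hn.ne'
    omega
  rcases hy with hd | hd
  · have := Nat.div_mul_cancel hd
    rw [hmeq] at this
    omega
  · have := Nat.div_mul_cancel hd
    rw [hneq] at this
    omega

variable [NeZero (m + n - 1)]

theorem val_posIdx {q : ℕ} (h₁ : 0 < q) (h₂ : q ≤ m + n - 1) : (posIdx m n q).val = q - 1 := by
  rw [posIdx, Fin.val_ofNat, Nat.mod_eq_of_lt (by omega)]

theorem walkMatrix_posIdx_of_lt {q : ℕ} (h₁ : 0 < q) (h₂ : q < n) :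
    walkMatrix m n (posIdx m n q) = Pi.single (posIdx m n (q + m)) 1 := by
  have hq : (posIdx m n q).val = q - 1 := val_posIdx h₁ (by omega)
  have hq' : (posIdx m n (q + m)).val = q + m - 1 := val_posIdx (by omega) (by omega)
  funext j
  simp only [walkMatrix, of_apply, Pi.single_apply, Fin.ext_iff, hq, hq']
  split_ifs <;> first | rfl | omega

theorem walkMatrix_posIdx_of_gt {q : ℕ} (h₁ : n < q) (h₂ : q ≤ m + n - 1) :
    walkMatrix m n (posIdx m n q) = (X : ℤ[X]) ^ n • Pi.single (posIdx m n (q - n)) 1 := by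
  have hq : (posIdx m n q).val = q - 1 := val_posIdx (by omega) h₂
  have hq' : (posIdx m n (q - n)).val = q - n - 1 := val_posIdx (by omega) (by omega)
  funext j
  simp only [walkMatrix, of_apply, Pi.smul_apply, Pi.single_apply, Fin.ext_iff, hq, hq']
  split_ifs <;> first | omega | simp

theorem walkMatrix_posIdx_self (hm : 0 < m) (hn : 0 < n) :
    walkMatrix m n (posIdx m n n) = 0 := by
  have hq : (posIdx m n n).val = n - 1 := val_posIdx hn (by omega)
  funext j
  simp only [walkMatrix, of_apply, hq, Pi.zero_apply]
  split_ifs <;> first | rfl | omega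

theorem walkMatrix_posIdx_walkPos (hm : 0 < m) (hn : 0 < n) {x y : ℕ}
    (hne : x / m * m + m ≠ x / n * n + n) (hy : y = min (x / m * m + m) (x / n * n + n)) :
    walkMatrix m n (posIdx m n (walkPos m n x)) =
      (X : ℤ[X]) ^ (y / n * n - x / n * n) • Pi.single (posIdx m n (walkPos m n y)) 1 := by
  have := Nat.div_mul_le_self x m
  have := Nat.div_mul_le_self x n
  have := Nat.lt_div_mul_add (a := x) hm
  have := Nat.lt_div_mul_add (a := x) hn
  rcases hne.lt_or_gt with h | h
  · rw [min_eq_left h.le] at hy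
    have hym : y / m = x / m + 1 :=
      Nat.div_eq_of_le_of_lt_add (by rw [hy, add_one_mul]) (by rw [hy, add_one_mul]; omega)
    have hyn : y / n = x / n := Nat.div_eq_of_le_of_lt_add (by omega) (by omega)
    have hpos : walkPos m n y = walkPos m n x + m := by
      unfold walkPos
      rw [hym, hyn, add_one_mul]
      omega
    rw [hyn, Nat.sub_self, pow_zero, one_smul, hpos]
    exact walkMatrix_posIdx_of_lt (walkPos_pos hm x) (by unfold walkPos; omega)
  · rw [min_eq_right h.le] at hy
    have hyn : y / n = x / n + 1 :=
      Nat.div_eq_of_le_of_lt_add (by rw [hy, add_one_mul]) (by rw [hy, add_one_mul]; omega)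
    have hym : y / m = x / m := Nat.div_eq_of_le_of_lt_add (by omega) (by omega)
    have hpos : walkPos m n y = walkPos m n x - n := by
      unfold walkPos
      rw [hym, hyn, add_one_mul]
      omega
    rw [hyn, add_one_mul, Nat.add_sub_cancel_left, hpos]
    exact walkMatrix_posIdx_of_gt (by unfold walkPos; omega) (walkPos_le hn x)

end Positions

section MultSet

variable {m n : ℕ} {k : ℕ → ℕ}

theorem multSet_enum_zero (hmem : ∀ x, x ∈ multSet m n ↔ ∃ i < m + n, k i = x)
    (hk : StrictMonoOn k (Set.Iio (m + n))) : k 0 = 0 :=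
  Nat.le_zero.1 (enum_zero_le hmem hk ⟨Or.inl (dvd_zero m), Nat.zero_le _⟩)

theorem multSet_enum_last (hmem : ∀ x, x ∈ multSet m n ↔ ∃ i < m + n, k i = x)
    (hk : StrictMonoOn k (Set.Iio (m + n))) (hm : 0 < m) : k (m + n - 1) = m * n :=
  le_antisymm ((hmem _).2 ⟨m + n - 1, by omega, rfl⟩).2
    (le_enum_pred hmem hk ⟨Or.inl (dvd_mul_right m n), le_rfl⟩)

theorem multSet_enum_lt_mul (hmem : ∀ x, x ∈ multSet m n ↔ ∃ i < m + n, k i = x)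
    (hk : StrictMonoOn k (Set.Iio (m + n))) (hm : 0 < m) {j : ℕ} (hj : j + 1 < m + n) :
    k j < m * n :=
  multSet_enum_last hmem hk hm ▸
    (hk.lt_iff_lt (show j < m + n by omega) (show m + n - 1 < m + n by omega)).2 (by omega)

theorem multSet_enum_succ (hmem : ∀ x, x ∈ multSet m n ↔ ∃ i < m + n, k i = x)
    (hk : StrictMonoOn k (Set.Iio (m + n))) (hm : 0 < m) (hn : 0 < n) {j : ℕ}
    (hj : j + 1 < m + n) : k (j + 1) = min (k j / m * m + m) (k j / n * n + n) := by
  have hlt := multSet_enum_lt_mul hmem hk hm hj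
  have hsucc : k j < k (j + 1) := (hk.lt_iff_lt (show j < m + n by omega) hj).2 (by omega)
  apply le_antisymm
  · have hA := Nat.div_mul_add_le_of_dvd_of_lt hm (dvd_mul_right m n) hlt
    have hB := Nat.div_mul_add_le_of_dvd_of_lt hn (dvd_mul_left n m) hlt
    have := Nat.lt_div_mul_add (a := k j) hm
    have := Nat.lt_div_mul_add (a := k j) hn
    exact le_min
      (enum_succ_le hmem hk hj ⟨Or.inl ⟨k j / m + 1, by ring⟩, hA⟩ (by omega))
      (enum_succ_le hmem hk hj ⟨Or.inr ⟨k j / n + 1, by ring⟩, hB⟩ (by omega))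
  · rcases ((hmem _).2 ⟨j + 1, hj, rfl⟩).1 with hd | hd
    · exact min_le_of_left_le (Nat.div_mul_add_le_of_dvd_of_lt hm hd hsucc)
    · exact min_le_of_right_le (Nat.div_mul_add_le_of_dvd_of_lt hn hd hsucc)

theorem walkPos_enum_last (hmem : ∀ x, x ∈ multSet m n ↔ ∃ i < m + n, k i = x)
    (hk : StrictMonoOn k (Set.Iio (m + n))) (hm : 0 < m) (hn : 0 < n) :
    walkPos m n (k (m + n - 2)) = n := by
  have hlt := multSet_enum_lt_mul hmem hk hm (j := m + n - 2) (by omega)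
  have h := multSet_enum_succ hmem hk hm hn (j := m + n - 2) (by omega)
  rw [show m + n - 2 + 1 = m + n - 1 by omega, multSet_enum_last hmem hk hm] at h
  have hA := Nat.div_mul_add_le_of_dvd_of_lt hm (dvd_mul_right m n) hlt
  have hB := Nat.div_mul_add_le_of_dvd_of_lt hn (dvd_mul_left n m) hlt
  unfold walkPos
  omega

theorem walkPos_enum_injOn (hmem : ∀ x, x ∈ multSet m n ↔ ∃ i < m + n, k i = x)
    (hk : StrictMonoOn k (Set.Iio (m + n))) (hm : 0 < m) (hn : 0 < n) (hcop : m.Coprime n) :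
    Set.InjOn (fun j => walkPos m n (k j)) (Set.Iio (m + n - 1)) := by
  have key : ∀ i j, i < j → j < m + n - 1 → walkPos m n (k i) ≠ walkPos m n (k j) :=
    fun i j hij hj => walkPos_ne hm hn hcop
      ((hk.lt_iff_lt (show i < m + n by omega) (show j < m + n by omega)).2 hij)
      ((hmem _).2 ⟨j, by omega, rfl⟩).1 (multSet_enum_lt_mul hmem hk hm (by omega))
  intro i hi j hj h
  rcases lt_trichotomy i j with hij | hij | hij
  · exact absurd h (key i j hij hj)
  · exact hij
  · exact absurd h.symm (key j i hij hi)

variable [NeZero (m + n - 1)]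

theorem walkMatrix_posIdx_enum (hmem : ∀ x, x ∈ multSet m n ↔ ∃ i < m + n, k i = x)
    (hk : StrictMonoOn k (Set.Iio (m + n))) (hm : 0 < m) (hn : 0 < n) (hcop : m.Coprime n) {j : ℕ}
    (hj : j + 2 < m + n) :
    walkMatrix m n (posIdx m n (walkPos m n (k j))) =
      (X : ℤ[X]) ^ (k (j + 1) / n * n - k j / n * n) •
        Pi.single (posIdx m n (walkPos m n (k (j + 1)))) 1 := by
  have hsucc := multSet_enum_succ hmem hk hm hn (j := j) (by omega)
  refine walkMatrix_posIdx_walkPos hm hn (fun h => ?_) hsucc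
  rw [← h, min_self] at hsucc
  have hdvd : m * n ∣ k (j + 1) := hcop.mul_dvd_of_dvd_of_dvd
    ⟨k j / m + 1, by rw [hsucc]; ring⟩ ⟨k j / n + 1, by rw [hsucc, h]; ring⟩
  have := Nat.le_of_dvd (by omega) hdvd
  have := multSet_enum_lt_mul hmem hk hm (j := j + 1) (by omega)
  omega

theorem walkMatrix_pow_eq_zero (hmem : ∀ x, x ∈ multSet m n ↔ ∃ i < m + n, k i = x)
    (hk : StrictMonoOn k (Set.Iio (m + n))) (hm : 0 < m) (hn : 0 < n) (hcop : m.Coprime n) :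
    walkMatrix m n ^ (m + n - 1) = 0 := by
  set p : ℕ → Fin (m + n - 1) := fun j => posIdx m n (walkPos m n (k j))
  have hinj : Function.Injective fun j : Fin (m + n - 1) => p j := by
    intro i j h
    have h' := congrArg Fin.val h
    simp only [p, val_posIdx (walkPos_pos hm _) (walkPos_le hn _)] at h'
    have := walkPos_pos (n := n) hm (k i)
    have := walkPos_pos (n := n) hm (k j)
    exact Fin.ext (walkPos_enum_injOn hmem hk hm hn hcop i.isLt j.isLt (by dsimp only; omega))
  refine pow_eq_zero_of_row_eq (p := p)
    (fun j hj => walkMatrix_posIdx_enum hmem hk hm hn hcop (by omega)) ?_ fun q => ?_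
  · simp only [p]
    rw [show m + n - 1 - 1 = m + n - 2 by omega, walkPos_enum_last hmem hk hm hn]
    exact walkMatrix_posIdx_self hm hn
  · obtain ⟨j, rfl⟩ := Finite.injective_iff_surjective.1 hinj q
    exact ⟨j, j.isLt, rfl⟩

theorem walkMatrix_pow_dotProduct (hmem : ∀ x, x ∈ multSet m n ↔ ∃ i < m + n, k i = x)
    (hk : StrictMonoOn k (Set.Iio (m + n))) (hm : 0 < m) (hn : 0 < n) (hcop : m.Coprime n)
    {j : ℕ} (hj : j + 1 < m + n) :
    Pi.single (posIdx m n m) 1 ⬝ᵥ (walkMatrix m n ^ j *ᵥ walkCol m n) = X ^ k (j + 1) := by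
  set p : ℕ → Fin (m + n - 1) := fun j => posIdx m n (walkPos m n (k j))
  have hp0 : p 0 = posIdx m n m := by simp [p, multSet_enum_zero hmem hk, walkPos]
  have hrow := single_one_vecMul_pow_of_row_eq (p := p) (L := m + n - 1) (j := 0) (l := j)
    (fun i hi => walkMatrix_posIdx_enum hmem hk hm hn hcop (j := i) (by omega)) (by omega)
  have hmono : MonotoneOn (fun i => k i / n * n) (Set.Iic j) := fun a ha b hb hab =>
    Nat.mul_le_mul_right _ <| Nat.div_le_div_right <| hk.monotoneOn
      (show a < m + n by simp at ha; omega) (show b < m + n by simp at hb; omega) hab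
  have hcol : walkCol m n (p j) = X ^ min (walkPos m n (k j)) n := by
    simp only [walkCol, p, val_posIdx (walkPos_pos hm _) (walkPos_le hn _)]
    rw [Nat.sub_add_cancel (walkPos_pos hm _)]
  rw [dotProduct_mulVec, ← hp0, hrow, zero_add, ← range_eq_Ico, prod_range_pow_tsub _ hmono,
    smul_dotProduct, single_dotProduct, one_mul, hcol, smul_eq_mul, ← pow_add,
    multSet_enum_succ hmem hk hm hn hj, multSet_enum_zero hmem hk, Nat.zero_div, zero_mul,
    Nat.sub_zero]
  have := Nat.div_mul_le_self (k j) n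
  have := Nat.lt_div_mul_add (a := k j) hm
  congr 1
  unfold walkPos
  omega

end MultSet

/-- Let `k` be the increasing enumeration of `𝔉(m,n)`
and let `M(m,n)` be the `(m+n-1) × (m+n-1)` matrix over `ℤ[t,x]`
(realized as `Polynomial (Polynomial ℤ)`, with `t` the inner and `x` the
outer variable, so `t = C X` and `x = X`) described by: row `I`
(`1 ≤ I ≤ n-1`) has `-t^I` in column `m` and `1` in column `m+I`; row `n`
has `-t^n` in column `m`; row `n+i` (`1 ≤ i ≤ m-1`) has `t^n` in column
`i` and `-t^n` in column `m`; all other entries vanish.  Then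
`det (1 - x • M(m,n)) = Σ_{i=0}^{m+n-1} t^(k i) * x^i`. -/
theorem det_one_sub_xM (m n : ℕ) (hm : 2 ≤ m) (hmn : m < n)
    (hcop : Nat.Coprime m n) (k : ℕ → ℕ)
    (hmono : ∀ i j : ℕ, i < j → j < m + n → k i < k j)
    (hmem : ∀ x : ℕ, ((m ∣ x ∨ n ∣ x) ∧ x ≤ m * n) ↔ ∃ i < m + n, k i = x)
    (M : Matrix (Fin (m + n - 1)) (Fin (m + n - 1)) (Polynomial (Polynomial ℤ)))
    (hM : ∀ i j : Fin (m + n - 1), M i j =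
      if i.val + 1 ≤ n - 1 then
        (if j.val + 1 = m then -(Polynomial.C (Polynomial.X : Polynomial ℤ)) ^ (i.val + 1)
         else if j.val + 1 = m + (i.val + 1) then 1 else 0)
      else if i.val + 1 = n then
        (if j.val + 1 = m then -(Polynomial.C (Polynomial.X : Polynomial ℤ)) ^ n else 0)
      else
        (if j.val + 1 = i.val + 1 - n then (Polynomial.C (Polynomial.X : Polynomial ℤ)) ^ n
         else if j.val + 1 = m then -(Polynomial.C (Polynomial.X : Polynomial ℤ)) ^ n else 0)) :
    Matrix.det (1 - (Polynomial.X : Polynomial (Polynomial ℤ)) • M) =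
      ∑ i ∈ Finset.range (m + n),
        Polynomial.C (Polynomial.X ^ (k i)) * Polynomial.X ^ i := by
  have hm0 : 0 < m := by omega
  have hn0 : 0 < n := by omega
  have : NeZero (m + n - 1) := ⟨by omega⟩
  have hk : StrictMonoOn k (Set.Iio (m + n)) := fun i hi j hj hij => hmono i j hij hj
  have hcolm : (posIdx m n m).val = m - 1 := val_posIdx hm0 (by omega)
  have hM' : M = (walkMatrix m n - replicateCol Unit (walkCol m n) *
      replicateRow Unit (Pi.single (posIdx m n m) (1 : ℤ[X]))).map C := by
    ext i j : 1
    rw [hM]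
    simp [Matrix.mul_apply, walkMatrix, walkCol, Pi.single_apply, Fin.ext_iff, hcolm]
    split_ifs <;> first
      | omega
      | simp [show i.val + 1 = n by omega]
      | simp [min_eq_left (show i.val + 1 ≤ n by omega)]
      | simp [min_eq_right (show n ≤ i.val + 1 by omega)]
  have hsum := sum_range_succ' (fun i => C (X ^ k i) * (X : ℤ[X][X]) ^ i) (m + n - 1)
  rw [Nat.sub_add_cancel (by omega)] at hsum
  have hrev := charpolyRev_sub_replicateCol_mul_replicateRow
    (walkMatrix_pow_eq_zero hmem hk hm0 hn0 hcop) (walkCol m n) (Pi.single (posIdx m n m) 1)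
  rw [charpolyRev] at hrev
  rw [hsum, hM', hrev, multSet_enum_zero hmem hk, pow_zero, pow_zero, C_1, one_mul, add_comm]
  refine congrArg (· + 1) (sum_congr rfl fun j hj => ?_)
  rw [walkMatrix_pow_dotProduct hmem hk hm0 hn0 hcop (by rw [mem_range] at hj; omega)]
end

section
/- Let N ≥ 2 be an integer and let F, G ∈ ℚ[t, t⁻¹] be Laurent polynomials with F(1) = G(1) = 0 such that F(ζ_d) = G(ζ_d) for every divisor d ≥ 2 of N and every primitive d-th root of unity ζ_d ∈ ℂ. Then t^N − 1 divides F − G in ℚ[t, t⁻¹]. Furthermore, if F and G are symmetric Laurent polynomials with span(F) ≤ N−1 and span(G) ≤ 2⌊N/2⌋, then F = G in ℚ[t, t⁻¹]. -/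
open LaurentPolynomial

/-- Evaluation of a Laurent polynomial with rational coefficients at a
(nonzero) complex number `z`: `Σ aᵢ zⁱ` over the (finite) support. -/
noncomputable def LaurentPolynomial.evalAt (z : ℂ) (F : LaurentPolynomial ℚ) : ℂ :=
  Finsupp.sum F.coeff fun n a => (a : ℂ) * z ^ n

/-- A Laurent polynomial `F(t) = a₀ + Σ_{i≥1} aᵢ (tⁱ + t⁻ⁱ)` is symmetric
iff its coefficients satisfy `F i = F (-i)` for all `i : ℤ`. -/
def LaurentPolynomial.IsSymmetric (F : LaurentPolynomial ℚ) : Prop :=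
  ∀ i : ℤ, F.coeff i = F.coeff (-i)

/-- `span F ≤ s`: the difference between any two exponents occurring in
`F` (in particular, between the maximal and minimal degrees) is at most
`s`. -/
def LaurentPolynomial.SpanLE (F : LaurentPolynomial ℚ) (s : ℤ) : Prop :=
  ∀ i j : ℤ, F.coeff i ≠ 0 → F.coeff j ≠ 0 → i - j ≤ s

/-!
Vanishing at `1` and at every primitive `d`-th root of unity, `d ∣ N`, means that `F - G` vanishes
at all `N`-th roots of unity; after clearing denominators by a power of `T`, the polynomial
`X ^ N - 1`, a product of distinct linear factors over `ℂ`, divides it, and this descends to `ℚ`.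
For the second part, a nonzero multiple `(T ^ N - 1) K` has span at least `N`, while symmetry and
the span bounds confine `F - G` to `[-N/2, N/2]`. This leaves only `K = c T ^ (-N/2)` with `N` even,
and then `F - G = c (T ^ (N/2) - T ^ (-N/2))` is antisymmetric, so `c = 0`.
-/

open Polynomial in
theorem Polynomial.X_pow_sub_one_dvd_of_forall_isRoot {K : Type*} [Field K] {n : ℕ} (hn : 0 < n)
    {ζ : K} (hζ : IsPrimitiveRoot ζ n) {p : K[X]} (hp : ∀ z : K, z ^ n = 1 → p.IsRoot z) :
    X ^ n - 1 ∣ p := by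
  rw [X_pow_sub_one_eq_prod hn hζ]
  refine Finset.prod_dvd_of_coprime (fun a _ b _ hab => pairwise_coprime_X_sub_C
    Function.injective_id hab) fun z hz => dvd_iff_isRoot.mpr (hp z ?_)
  exact (mem_nthRootsFinset hn 1).mp hz

namespace LaurentPolynomial

theorem T_sub_one_dvd_of_forall_eval₂_eq_zero {K L : Type*} [Field K] [Field L] (f : K →+* L)
    {n : ℕ} (hn : 0 < n) {ζ : L} (hζ : IsPrimitiveRoot ζ n) {p : K[T;T⁻¹]}
    (hp : ∀ u : Lˣ, u ^ n = 1 → eval₂ f u p = 0) : T (n : ℤ) - 1 ∣ p := by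
  obtain ⟨m, q, hq⟩ := exists_T_pow p
  have hq_roots : ∀ z : L, z ^ n = 1 → (q.map f).IsRoot z := fun z hz => by
    have hz' := hp (Units.ofPowEqOne z n hz hn.ne') (Units.pow_ofPowEqOne hz hn.ne')
    rw [Polynomial.IsRoot, Polynomial.eval_map, ← Units.val_ofPowEqOne z n hz hn.ne',
      ← eval₂_toLaurent, hq, map_mul, hz', zero_mul]
  have hdvd : Polynomial.X ^ n - 1 ∣ q := by
    rw [← Polynomial.map_dvd_map' f]
    simpa using Polynomial.X_pow_sub_one_dvd_of_forall_isRoot hn hζ hq_roots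
  rw [← (isUnit_T (m : ℤ)).dvd_mul_right, ← hq]
  simpa [Polynomial.toLaurent_X_pow] using Polynomial.toLaurent.map_dvd hdvd

theorem evalAt_eq_eval₂ (u : ℂˣ) (F : ℚ[T;T⁻¹]) : evalAt u F = eval₂ (algebraMap ℚ ℂ) u F := by
  induction F using LaurentPolynomial.induction_on' with
  | add p q hp hq =>
    rw [map_add, ← hp, ← hq, evalAt, evalAt, evalAt, AddMonoidAlgebra.coeff_add]
    exact Finsupp.sum_add_index' (by simp) (by simp [add_mul])
  | C_mul_T n a =>
    rw [eval₂_C_mul_T, Units.val_zpow_eq_zpow_val, ← single_eq_C_mul_T]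
    simp [evalAt, -single_eq_C_mul_T]

theorem coeff_T_sub_one_mul {R : Type*} [Ring R] (n : ℤ) (K : R[T;T⁻¹]) (i : ℤ) :
    ((T n - 1) * K).coeff i = K.coeff (i - n) - K.coeff i := by
  rw [sub_mul, one_mul, AddMonoidAlgebra.coeff_sub, Finsupp.sub_apply, T,
    AddMonoidAlgebra.coeff_single_mul_apply, one_mul, neg_add_eq_sub]

namespace IsSymmetric

variable {F G : ℚ[T;T⁻¹]}

theorem sub (hF : F.IsSymmetric) (hG : G.IsSymmetric) : (F - G).IsSymmetric := fun i => by
  simp only [AddMonoidAlgebra.coeff_sub, Finsupp.sub_apply, hF i, hG i]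

theorem two_mul_le_of_spanLE (hF : F.IsSymmetric) {s : ℤ} (hs : F.SpanLE s) {i : ℤ}
    (hi : F.coeff i ≠ 0) : 2 * i ≤ s := by
  have := hs i (-i) hi (by rwa [← hF i])
  omega

theorem eq_zero_of_T_sub_one_dvd (hF : F.IsSymmetric) {n : ℕ} (hn : 0 < n)
    (hdvd : T (n : ℤ) - 1 ∣ F) (hsupp : ∀ i, F.coeff i ≠ 0 → 2 * i ≤ n) : F = 0 := by
  obtain ⟨K, rfl⟩ := hdvd
  by_contra hne
  have hK : K.coeff.support.Nonempty :=
    Finsupp.support_nonempty_iff.mpr fun h => hne (by simp [LaurentPolynomial.ext_iff, h])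
  set a := K.coeff.support.min' hK
  set b := K.coeff.support.max' hK
  have hab : a ≤ b := K.coeff.support.min'_le _ (K.coeff.support.max'_mem hK)
  have hKb : K.coeff b ≠ 0 := Finsupp.mem_support_iff.mp (K.coeff.support.max'_mem hK)
  have hKa : K.coeff a ≠ 0 := Finsupp.mem_support_iff.mp (K.coeff.support.min'_mem hK)
  have htop : ((T n - 1) * K).coeff (b + n) = K.coeff b := by
    rw [coeff_T_sub_one_mul, add_sub_cancel_right, sub_eq_self]
    exact Finsupp.notMem_support_iff.mp fun h => by
      have := K.coeff.support.le_max' _ h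
      omega
  have hbot : ((T n - 1) * K).coeff a = -K.coeff a := by
    rw [coeff_T_sub_one_mul, sub_eq_neg_self]
    exact Finsupp.notMem_support_iff.mp fun h => by
      have := K.coeff.support.min'_le _ h
      omega
  have hb := hsupp _ (htop ▸ hKb)
  have ha := hsupp (-a) (by rwa [← hF, hbot, neg_ne_zero])
  clear_value a b
  obtain rfl : a = b := by omega
  have hreflect : -(a + n) = a := by omega
  have hsym := hF (a + n)
  rw [hreflect, htop, hbot] at hsym
  exact hKa (by linarith)

end IsSymmetric

end LaurentPolynomial

/-- Let `N ≥ 2` and let `F, G ∈ ℚ[t,t⁻¹]` with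
`F(1) = G(1) = 0` satisfy `F(ζ_d) = G(ζ_d)` for every divisor `d ≥ 2`
of `N` and every primitive `d`-th root of unity `ζ_d ∈ ℂ`.  Then
`t^N - 1` divides `F - G` in `ℚ[t,t⁻¹]`; and if moreover `F`, `G` are
symmetric with `span F ≤ N - 1` and `span G ≤ 2⌊N/2⌋`, then `F = G`. -/
theorem laurent_euler_lift' (N : ℕ) (hN : 2 ≤ N) (F G : LaurentPolynomial ℚ)
    (hF1 : LaurentPolynomial.evalAt 1 F = 0)
    (hG1 : LaurentPolynomial.evalAt 1 G = 0)
    (heval : ∀ d : ℕ, 2 ≤ d → d ∣ N → ∀ ζ : ℂ, IsPrimitiveRoot ζ d →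
      LaurentPolynomial.evalAt ζ F = LaurentPolynomial.evalAt ζ G) :
    ((T (N : ℤ) - 1) ∣ F - G) ∧
    (F.IsSymmetric → G.IsSymmetric →
      F.SpanLE ((N : ℤ) - 1) → G.SpanLE ((2 * (N / 2) : ℕ) : ℤ) →
      F = G) := by
  have hdvd : T (N : ℤ) - 1 ∣ F - G := by
    refine T_sub_one_dvd_of_forall_eval₂_eq_zero (algebraMap ℚ ℂ) (by omega)
      (Complex.isPrimitiveRoot_exp N (by omega)) fun u hu => ?_
    rw [map_sub, ← evalAt_eq_eval₂, ← evalAt_eq_eval₂, sub_eq_zero]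
    have hu' : (u : ℂ) ^ N = 1 := by rw [← Units.val_pow_eq_pow_val, hu, Units.val_one]
    have hdvdN : orderOf (u : ℂ) ∣ N := orderOf_dvd_of_pow_eq_one hu'
    obtain h1 | h1 := eq_or_ne (orderOf (u : ℂ)) 1
    · rw [orderOf_eq_one_iff.mp h1, hF1, hG1]
    · have h0 : orderOf (u : ℂ) ≠ 0 := fun h => by simp [h] at hdvdN; omega
      exact heval _ (by omega) hdvdN _ (IsPrimitiveRoot.orderOf _)
  refine ⟨hdvd, fun hFs hGs hFsp hGsp => sub_eq_zero.mp <|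
    (hFs.sub hGs).eq_zero_of_T_sub_one_dvd (by omega) hdvd fun i hi => ?_⟩
  obtain hF | hG : F.coeff i ≠ 0 ∨ G.coeff i ≠ 0 := by
    by_contra! h
    simp [h] at hi
  · have := hFs.two_mul_le_of_spanLE hFsp hF
    omega
  · have := hGs.two_mul_le_of_spanLE hGsp hG
    omega
end

section
/- Let m̄ be an integer with m·m̄ ≡ 1 (mod m+n) and set ξ := ζ^{m̄} (so ξ^m = ζ and ξ is again a primitive d-th root of unity). Then R(m,n) = m(n+1) + Σ_{j=1}^{m−1} (m−j)(ξ^j + ξ^{−j}) = ξ^{−(m−1)}·((ξ^m −1)/(ξ−1))² + mn = |(ξ^m − 1)/(ξ − 1)|² + mn. -/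
/-!
Write `N = m + n`. The elements of `𝔉(m,n)` have the closed form
`k_i = n ⌊m i / N⌋ + min (m i mod N) n` (`fEnum`), so that `k_{i+1} - k_i = min(m, u, N - u)`
with `u = m (i + 1) mod N`. Abel summation together with `ζ ^ N = 1` gives
`R = m n - Σ_i (k_{i+1} - k_i) ζ^{i+1}`; since `ζ^i = ξ^{m i mod N}` and `i ↦ m i mod N`
permutes the residues mod `N`, this is `R = m n - Σ_{u<N} min(m, u, N - u) ξ^u`.
Adding `m Σ_u ξ^u = 0` turns the weights into the triangle `m - |u|` (`u` read mod `N`,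
`|u| < m`), which is the coefficient sequence of
`(1 + ξ + ⋯ + ξ^{m-1})(1 + ξ⁻¹ + ⋯ + ξ^{-(m-1)}) = |(ξ^m - 1)/(ξ - 1)|²`.
-/

open Finset

section RingSums

variable {R : Type*} [CommRing R]

theorem sub_one_mul_sum_range_mul_pow (z : R) (f : ℕ → R) (M : ℕ) :
    (z - 1) * ∑ i ∈ range (M + 1), f i * z ^ i
      = f M * z ^ (M + 1) - f 0 - ∑ i ∈ range M, (f (i + 1) - f i) * z ^ (i + 1) := by
  induction M with
  | zero => rw [sum_range_one, sum_range_zero]; ring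
  | succ M ih =>
    rw [sum_range_succ, mul_add, ih, sum_range_succ (fun i => (f (i + 1) - f i) * z ^ (i + 1))]
    ring

theorem pow_mul_geom_sum_of_mul_eq_one {x y : R} (hxy : x * y = 1) (M : ℕ) :
    x ^ M * ∑ j ∈ range M, y ^ j = ∑ j ∈ range M, x ^ (j + 1) := by
  rw [mul_sum, ← sum_range_reflect]
  refine sum_congr rfl fun j hj => ?_
  have hjM : j + 1 + (M - 1 - j) = M := by have := mem_range.mp hj; omega
  rw [show x ^ M = x ^ (j + 1) * x ^ (M - 1 - j) by rw [← pow_add, hjM], mul_assoc, ← mul_pow,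
    hxy, one_pow, mul_one]

theorem sum_range_succ_tsub_mul_pow (x : R) (M : ℕ) :
    ∑ j ∈ range (M + 1), ((M + 1 - j : ℕ) : R) * x ^ j
      = ∑ j ∈ range M, ((M - j : ℕ) : R) * x ^ j + ∑ j ∈ range (M + 1), x ^ j := by
  have hcoef : ∀ j ∈ range (M + 1), ((M + 1 - j : ℕ) : R) * x ^ j
      = ((M - j : ℕ) : R) * x ^ j + x ^ j := by
    intro j hj
    rw [Nat.sub_add_comm (mem_range_succ_iff.mp hj)]
    push_cast
    ring
  rw [sum_congr rfl hcoef, sum_add_distrib, sum_range_succ (fun j => ((M - j : ℕ) : R) * x ^ j)]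
  simp

theorem geom_sum_mul_geom_sum_add_of_mul_eq_one {x y : R} (hxy : x * y = 1) (M : ℕ) :
    (∑ j ∈ range M, x ^ j) * (∑ j ∈ range M, y ^ j) + M
      = ∑ j ∈ range M, ((M - j : ℕ) : R) * x ^ j
        + ∑ j ∈ range M, ((M - j : ℕ) : R) * y ^ j := by
  induction M with
  | zero => simp
  | succ M ih =>
    have hshift : ∀ z : R,
        ∑ j ∈ range M, z ^ (j + 1) = ∑ j ∈ range M, z ^ j + z ^ M - 1 := by
      intro z
      rw [← sum_range_succ, sum_range_succ']
      ring
    have hxM := pow_mul_geom_sum_of_mul_eq_one hxy M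
    have hyM := pow_mul_geom_sum_of_mul_eq_one ((mul_comm y x).trans hxy) M
    have hxyM : x ^ M * y ^ M = 1 := by rw [← mul_pow, hxy, one_pow]
    rw [sum_range_succ_tsub_mul_pow, sum_range_succ_tsub_mul_pow, sum_range_succ (fun j => x ^ j),
      sum_range_succ (fun j => y ^ j)]
    push_cast
    linear_combination ih + hxM + hyM + hxyM + hshift x + hshift y

theorem sum_range_tsub_mul_pow_of_le {M L : ℕ} (h : M ≤ L) (x : R) :
    ∑ j ∈ range L, ((M - j : ℕ) : R) * x ^ j
      = ∑ j ∈ range M, ((M - j : ℕ) : R) * x ^ j := by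
  refine (sum_subset (range_mono h) fun j _ hj => ?_).symm
  rw [Nat.sub_eq_zero_of_le (not_lt.mp (mem_range.not.mp hj)), Nat.cast_zero, zero_mul]

theorem sum_range_tsub_mul_pow_eq (x : R) (M : ℕ) :
    ∑ j ∈ range M, ((M - j : ℕ) : R) * x ^ j
      = M + ∑ j ∈ Icc 1 (M - 1), ((M - j : ℕ) : R) * x ^ j := by
  cases M with
  | zero => simp
  | succ M =>
    rw [sum_range_succ', Nat.add_sub_cancel, ← Ico_add_one_right_eq_Icc, sum_Ico_eq_sum_range]
    simp [add_comm]

end RingSums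

theorem sum_range_comp_mul_mod {M : Type*} [AddCommMonoid M] {N a b : ℕ}
    (hab : a * b ≡ 1 [MOD N]) (g : ℕ → M) :
    ∑ i ∈ range N, g (a * i % N) = ∑ i ∈ range N, g i := by
  have hinv : ∀ {c e : ℕ}, c * e ≡ 1 [MOD N] → ∀ i < N, c * (e * i % N) % N = i := by
    intro c e hce i hi
    calc c * (e * i % N) % N = c * e * i % N := by
          rw [Nat.mul_mod, Nat.mod_mod, ← Nat.mul_mod, mul_assoc]
      _ = 1 * i % N := hce.mul_right i
      _ = i := by rw [one_mul, Nat.mod_eq_of_lt hi]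
  have hba : b * a ≡ 1 [MOD N] := by rwa [mul_comm]
  refine sum_nbij' (fun i => a * i % N) (fun i => b * i % N) ?_ ?_ ?_ ?_ fun _ _ => rfl
  · intro i hi; exact mem_range.mpr (Nat.mod_lt _ (by have := mem_range.mp hi; omega))
  · intro i hi; exact mem_range.mpr (Nat.mod_lt _ (by have := mem_range.mp hi; omega))
  · intro i hi; exact hinv hba i (mem_range.mp hi)
  · intro i hi; exact hinv hab i (mem_range.mp hi)

theorem eqOn_Iio_of_strictMonoOn_of_mapsTo {α : Type*} [LinearOrder α] {f g : ℕ → α}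
    {N : ℕ}
    (hf : StrictMonoOn f (Set.Iio N)) (hg : StrictMonoOn g (Set.Iio N))
    (hgf : Set.MapsTo g (Set.Iio N) (f '' Set.Iio N)) : Set.EqOn f g (Set.Iio N) := by
  classical
  set s := (range N).image f
  have hs : s.card = N := by
    rw [card_image_of_injOn (by rw [coe_range]; exact hf.injOn), card_range]
  have hemb : ∀ {h : ℕ → α}, StrictMonoOn h (Set.Iio N) →
      Set.MapsTo h (Set.Iio N) (f '' Set.Iio N) → (fun i : Fin N => h i) = s.orderEmbOfFin hs :=
    fun hh hhs =>
      orderEmbOfFin_unique hs (fun i => by simpa [s] using hhs (Set.mem_Iio.mpr i.2))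
        fun i j hij => hh (Set.mem_Iio.mpr i.2) (Set.mem_Iio.mpr j.2) hij
  intro i hi
  exact congrFun ((hemb hf (Set.mapsTo_image f _)).trans (hemb hg hgf).symm) ⟨i, hi⟩

theorem zpow_mul_sq_geom_sum_eq {K : Type*} [Field K] {x : K} (hx0 : x ≠ 0) (hx1 : x ≠ 1)
    (M : ℕ) :
    x ^ (-((M : ℤ) - 1)) * ((x ^ M - 1) / (x - 1)) ^ 2
      = (∑ j ∈ range M, x ^ j) * ∑ j ∈ range M, x⁻¹ ^ j := by
  have hinv1 : x⁻¹ ≠ 1 := inv_ne_one.mpr hx1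
  rw [geom_sum_eq hx1, geom_sum_eq hinv1, neg_sub, zpow_sub₀ hx0, zpow_one, zpow_natCast, inv_pow]
  have : x - 1 ≠ 0 := sub_ne_zero.mpr hx1
  have : x⁻¹ - 1 ≠ 0 := sub_ne_zero.mpr hinv1
  field_simp
  ring

theorem ofReal_norm_geom_sum_sq {x : ℂ} (hx : ‖x‖ = 1) (M : ℕ) :
    ((‖∑ j ∈ range M, x ^ j‖ : ℝ) : ℂ) ^ 2
      = (∑ j ∈ range M, x ^ j) * ∑ j ∈ range M, x⁻¹ ^ j := by
  rw [← Complex.mul_conj', map_sum, Complex.inv_eq_conj hx]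
  simp_rw [map_pow]

section Enumeration

variable {m n : ℕ}

def fGap (m n u : ℕ) : ℕ := min m (min u (m + n - u))

theorem neg_sum_range_fGap_mul_pow_add {R : Type*} [CommRing R] (hmn : m ≤ n) {x y : R}
    (hxy : x * y = 1) (hsum : ∑ u ∈ range (m + n), x ^ u = 0) :
    -∑ u ∈ range (m + n), (fGap m n u : R) * x ^ u + m
      = ∑ j ∈ range m, ((m - j : ℕ) : R) * x ^ j
        + ∑ j ∈ range m, ((m - j : ℕ) : R) * y ^ j := by
  set N := m + n with hN
  have hxN : x ^ N = 1 := by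
    have := geom_sum_mul x N
    rw [hsum, zero_mul] at this
    linear_combination -this
  have hcoef : ∀ u ∈ range N, ((m : R) - fGap m n u) * x ^ u
      = ((m - u : ℕ) : R) * x ^ u + ((m - (N - u) : ℕ) : R) * x ^ u := by
    intro u hu
    have h : ((fGap m n u + (m - u) + (m - (N - u)) : ℕ) : R) = m := by
      have := mem_range.mp hu
      congr 1
      unfold fGap
      omega
    push_cast at h
    linear_combination -h * x ^ u
  have hrefl : ∑ u ∈ range N, ((m - (N - u) : ℕ) : R) * x ^ u + m
      = ∑ v ∈ range (N + 1), ((m - v : ℕ) : R) * y ^ v := by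
    have hpow : ∀ v ≤ N, x ^ (N - v) = y ^ v := fun v hv => by
      calc x ^ (N - v) = x ^ (N - v) * (x * y) ^ v := by rw [hxy, one_pow, mul_one]
        _ = x ^ N * y ^ v := by rw [mul_pow, ← mul_assoc, ← pow_add, Nat.sub_add_cancel hv]
        _ = y ^ v := by rw [hxN, one_mul]
    have hlast := sum_range_succ (fun u => ((m - (N - u) : ℕ) : R) * x ^ u) N
    rw [Nat.sub_self, Nat.sub_zero, hxN, mul_one] at hlast
    rw [← hlast, ← sum_range_reflect]
    refine sum_congr rfl fun v hv => ?_
    have hv : v ≤ N := mem_range_succ_iff.mp hv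
    rw [Nat.add_sub_cancel, Nat.sub_sub_self hv, hpow v hv]
  calc -∑ u ∈ range N, (fGap m n u : R) * x ^ u + m
      = ∑ u ∈ range N, ((m : R) - fGap m n u) * x ^ u + m := by
        simp only [sub_mul, sum_sub_distrib, ← mul_sum, hsum, mul_zero, zero_sub]
    _ = ∑ u ∈ range N, ((m - u : ℕ) : R) * x ^ u
          + (∑ u ∈ range N, ((m - (N - u) : ℕ) : R) * x ^ u + m) := by
        rw [sum_congr rfl hcoef, sum_add_distrib, add_assoc]
    _ = _ := by
        rw [hrefl, sum_range_tsub_mul_pow_of_le (L := N) (by omega),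
          sum_range_tsub_mul_pow_of_le (L := N + 1) (by omega)]

def fEnum (m n i : ℕ) : ℕ := n * (m * i / (m + n)) + min (m * i % (m + n)) n

theorem fEnum_zero : fEnum m n 0 = 0 := by simp [fEnum]

theorem fEnum_add_sub_one (hm : 0 < m) : fEnum m n (m + n - 1) = m * n := by
  obtain ⟨m, rfl⟩ : ∃ m', m = m' + 1 := ⟨m - 1, by omega⟩
  obtain ⟨hq, ht⟩ : (m + 1) * (m + 1 + n - 1) / (m + 1 + n) = m
      ∧ (m + 1) * (m + 1 + n - 1) % (m + 1 + n) = n :=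
    (Nat.div_mod_unique (by omega)).mpr
      ⟨by rw [show m + 1 + n - 1 = m + n by omega]; ring, by omega⟩
  rw [fEnum, hq, ht, min_self]
  ring

theorem fEnum_succ (hmn : m ≤ n) (i : ℕ) :
    fEnum m n (i + 1) = fEnum m n i + fGap m n (m * (i + 1) % (m + n)) := by
  rcases Nat.eq_zero_or_pos m with rfl | hm
  · simp [fEnum, fGap]
  have hN : 0 < m + n := by omega
  unfold fEnum fGap
  set N := m + n
  set q := m * i / N
  set t := m * i % N
  have hdm : N * q + t = m * i := Nat.div_add_mod _ _
  have ht : t < N := Nat.mod_lt _ hN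
  rw [Nat.mul_succ]
  by_cases hwrap : t + m < N
  · obtain ⟨hq', ht'⟩ : (m * i + m) / N = q ∧ (m * i + m) % N = t + m :=
      (Nat.div_mod_unique hN).mpr ⟨by omega, hwrap⟩
    rw [hq', ht']
    omega
  · obtain ⟨hq', ht'⟩ : (m * i + m) / N = q + 1 ∧ (m * i + m) % N = t + m - N :=
      (Nat.div_mod_unique hN).mpr ⟨by rw [Nat.mul_succ]; omega, by omega⟩
    rw [hq', ht', Nat.mul_succ]
    omega

theorem fEnum_mem {i : ℕ} (hi : i < m + n) :
    (m ∣ fEnum m n i ∨ n ∣ fEnum m n i) ∧ fEnum m n i ≤ m * n := by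
  rcases Nat.eq_zero_or_pos m with rfl | hm
  · simp [fEnum]
  unfold fEnum
  set N := m + n
  set q := m * i / N
  set t := m * i % N
  have hdm : N * q + t = m * i := Nat.div_add_mod _ _
  have hq : q < m :=
    Nat.div_lt_of_lt_mul (by rw [mul_comm N]; exact Nat.mul_lt_mul_of_pos_left hi hm)
  refine ⟨?_, ?_⟩
  · rcases le_total t n with h | h
    · left
      rw [min_eq_left h, ← Nat.dvd_add_right (dvd_mul_right m q)]
      exact ⟨i, by rw [← hdm]; ring⟩
    · right
      rw [min_eq_right h, ← Nat.mul_succ]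
      exact dvd_mul_right _ _
  · calc n * q + min t n ≤ n * (q + 1) := by
          rw [Nat.mul_succ]; exact add_le_add_right (min_le_right _ _) _
      _ ≤ m * n := by rw [mul_comm m]; exact Nat.mul_le_mul_left _ hq

theorem fEnum_strictMonoOn (hm : 0 < m) (hmn : m ≤ n) (hcop : Nat.Coprime m (m + n)) :
    StrictMonoOn (fEnum m n) (Set.Iio (m + n)) := by
  have hgap : ∀ j, 0 < j → j < m + n → 0 < fGap m n (m * j % (m + n)) := by
    intro j hj0 hjN
    have hmod : m * j % (m + n) ≠ 0 := fun h0 =>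
      have := Nat.le_of_dvd hj0 (hcop.symm.dvd_of_dvd_mul_left (Nat.dvd_of_mod_eq_zero h0))
      by omega
    have := Nat.mod_lt (m * j) (show 0 < m + n by omega)
    unfold fGap
    omega
  intro i hi j hj hij
  refine strictMonoOn_Iic_of_lt_succ (n := m + n - 1) (fun l hl => ?_) (Set.mem_Iic.mpr ?_)
    (Set.mem_Iic.mpr ?_) hij
  · rw [Order.succ_eq_add_one, fEnum_succ hmn]
    exact Nat.lt_add_of_pos_right (hgap (l + 1) l.succ_pos (by omega))
  · have := Set.mem_Iio.mp hi; omega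
  · have := Set.mem_Iio.mp hj; omega

theorem eqOn_fEnum (hm : 0 < m) (hmn : m ≤ n) (hcop : Nat.Coprime m (m + n)) {k : ℕ → ℕ}
    (hmono : ∀ i j, i < j → j < m + n → k i < k j)
    (hmem : ∀ x, ((m ∣ x ∨ n ∣ x) ∧ x ≤ m * n) ↔ ∃ i < m + n, k i = x) :
    Set.EqOn k (fEnum m n) (Set.Iio (m + n)) :=
  eqOn_Iio_of_strictMonoOn_of_mapsTo (fun i _ j hj hij => hmono i j hij hj)
    (fEnum_strictMonoOn hm hmn hcop) fun _ hi => (hmem _).mp (fEnum_mem hi)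

theorem sub_one_mul_sum_range_fEnum {R : Type*} [CommRing R] (hm : 0 < m) (hmn : m ≤ n) {z : R}
    (hz : z ^ (m + n) = 1) :
    (z - 1) * ∑ i ∈ range (m + n), (fEnum m n i : R) * z ^ i
      = m * n - ∑ i ∈ range (m + n), (fGap m n (m * i % (m + n)) : R) * z ^ i := by
  obtain ⟨M, hM⟩ : ∃ M, m + n = M + 1 := ⟨m + n - 1, by omega⟩
  have hlast : fEnum m n M = m * n := by rw [show M = m + n - 1 by omega, fEnum_add_sub_one hm]
  have hrange : range (m + n) = range (M + 1) := by rw [hM]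
  rw [hrange, sub_one_mul_sum_range_mul_pow,
    sum_range_succ' (fun i => (fGap m n (m * i % (m + n)) : R) * z ^ i), ← hM, hz, hlast,
    fEnum_zero]
  simp [fEnum_succ hmn, fGap]

end Enumeration

theorem R_xi_forms_general (m n : ℕ) (hm : 2 ≤ m) (hmn : m < n)
    (k : ℕ → ℕ)
    (hmono : ∀ i j : ℕ, i < j → j < m + n → k i < k j)
    (hmem : ∀ x : ℕ, ((m ∣ x ∨ n ∣ x) ∧ x ≤ m * n) ↔ ∃ i < m + n, k i = x)
    (d : ℕ) (hd : 2 ≤ d) (hdvd : d ∣ m + n)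
    (ζ : ℂ) (hζ : IsPrimitiveRoot ζ d)
    (R : ℂ) (hR : R = (ζ - 1) * ∑ i ∈ Finset.range (m + n), (k i : ℂ) * ζ ^ i)
    (mbar : ℕ) (hmbar : m * mbar ≡ 1 [MOD (m + n)])
    (ξ : ℂ) (hξ : ξ = ζ ^ mbar) :
    ξ ^ m = ζ ∧ IsPrimitiveRoot ξ d ∧
    R = (m : ℂ) * (n + 1) + ∑ j ∈ Finset.Icc 1 (m - 1),
      ((m - j : ℕ) : ℂ) * (ξ ^ j + ξ⁻¹ ^ j) ∧
    R = ξ ^ (-((m : ℤ) - 1)) * ((ξ ^ m - 1) / (ξ - 1)) ^ 2 + (m : ℂ) * n ∧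
    R = ((‖(ξ ^ m - 1) / (ξ - 1)‖ : ℝ) : ℂ) ^ 2 + (m : ℂ) * n := by
  have hmbar' : mbar * m ≡ 1 [MOD m + n] := by rwa [mul_comm]
  have hζN : ζ ^ (m + n) = 1 := (hζ.pow_eq_one_iff_dvd _).mpr hdvd
  have hζpow : ∀ {a b : ℕ}, a ≡ b [MOD m + n] → ζ ^ a = ζ ^ b := fun hab =>
    pow_eq_pow_of_modEq hab hζN
  have hξm : ξ ^ m = ζ := by rw [hξ, ← pow_mul, hζpow hmbar', pow_one]
  have hξprim : IsPrimitiveRoot ξ d := by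
    rw [hξ]
    exact hζ.pow_of_coprime mbar
      ((Nat.coprime_of_mul_modEq_one m hmbar').coprime_dvd_right hdvd)
  have hξ1 : ξ ≠ 1 := hξprim.ne_one (by omega)
  have hξ0 : ξ ≠ 0 := hξprim.ne_zero (by omega)
  have hζξ : ∀ i, ζ ^ i = ξ ^ (m * i % (m + n)) := fun i => by
    rw [hξ, ← pow_mul]
    refine hζpow (Nat.ModEq.symm ?_)
    calc mbar * (m * i % (m + n)) ≡ mbar * m * i [MOD m + n] := by
          rw [mul_assoc]; exact (Nat.mod_modEq _ _).mul_left _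
      _ ≡ 1 * i [MOD m + n] := hmbar'.mul_right i
      _ = i := one_mul i
  have hRgap : R = m * n - ∑ u ∈ range (m + n), (fGap m n u : ℂ) * ξ ^ u := by
    rw [hR, sum_congr rfl fun i hi => by
        rw [eqOn_fEnum (by omega) hmn.le (Nat.coprime_of_mul_modEq_one mbar hmbar) hmono hmem
          (mem_range.mp hi)],
      sub_one_mul_sum_range_fEnum (by omega) hmn.le hζN]
    simp_rw [hζξ]
    rw [sum_range_comp_mul_mod hmbar (fun u => (fGap m n u : ℂ) * ξ ^ u)]
  have hsum : ∑ u ∈ range (m + n), ξ ^ u = 0 := by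
    rw [geom_sum_eq hξ1, (hξprim.pow_eq_one_iff_dvd _).mpr hdvd, sub_self, zero_div]
  have hT := neg_sum_range_fGap_mul_pow_add hmn.le (mul_inv_cancel₀ hξ0) hsum
  have hPQ := geom_sum_mul_geom_sum_add_of_mul_eq_one (mul_inv_cancel₀ hξ0) m
  have hRPQ : R = (∑ j ∈ range m, ξ ^ j) * (∑ j ∈ range m, ξ⁻¹ ^ j) + m * n := by
    linear_combination hRgap + hT - hPQ
  refine ⟨hξm, hξprim, ?_, ?_, ?_⟩
  · simp only [mul_add, sum_add_distrib]
    linear_combination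
      hRgap + hT + sum_range_tsub_mul_pow_eq ξ m + sum_range_tsub_mul_pow_eq ξ⁻¹ m
  · rwa [zpow_mul_sq_geom_sum_eq hξ0 hξ1]
  · rwa [← geom_sum_eq hξ1, ofReal_norm_geom_sum_sq (hξprim.norm'_eq_one (by omega))]

/-- In the setting of `R(m,n) = (ζ-1) Σ k_i ζ^i`
(with `ζ` a primitive `d`-th root of unity, `d ≥ 2`, `d ∣ m+n`), let
`m̄` satisfy `m·m̄ ≡ 1 (mod m+n)` and set `ξ = ζ^m̄`.  Then `ξ^m = ζ`,
`ξ` is again a primitive `d`-th root of unity, and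
`R(m,n) = m(n+1) + Σ_{j=1}^{m-1} (m-j)(ξ^j + ξ^{-j})
        = ξ^{-(m-1)} ((ξ^m - 1)/(ξ - 1))² + mn
        = |(ξ^m - 1)/(ξ - 1)|² + mn`. -/
theorem R_xi_forms (m n : ℕ) (hm : 2 ≤ m) (hmn : m < n)
    (hcop : Nat.Coprime m n) (k : ℕ → ℕ)
    (hmono : ∀ i j : ℕ, i < j → j < m + n → k i < k j)
    (hmem : ∀ x : ℕ, ((m ∣ x ∨ n ∣ x) ∧ x ≤ m * n) ↔ ∃ i < m + n, k i = x)
    (d : ℕ) (hd : 2 ≤ d) (hdvd : d ∣ m + n)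
    (ζ : ℂ) (hζ : IsPrimitiveRoot ζ d)
    (R : ℂ) (hR : R = (ζ - 1) * ∑ i ∈ Finset.range (m + n), (k i : ℂ) * ζ ^ i)
    (mbar : ℕ) (hmbar : m * mbar ≡ 1 [MOD (m + n)])
    (ξ : ℂ) (hξ : ξ = ζ ^ mbar) :
    ξ ^ m = ζ ∧ IsPrimitiveRoot ξ d ∧
    R = (m : ℂ) * (n + 1) + ∑ j ∈ Finset.Icc 1 (m - 1),
      ((m - j : ℕ) : ℂ) * (ξ ^ j + ξ⁻¹ ^ j) ∧
    R = ξ ^ (-((m : ℤ) - 1)) * ((ξ ^ m - 1) / (ξ - 1)) ^ 2 + (m : ℂ) * n ∧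
    R = ((‖(ξ ^ m - 1) / (ξ - 1)‖ : ℝ) : ℂ) ^ 2 + (m : ℂ) * n :=
  R_xi_forms_general m n hm hmn k hmono hmem d hd hdvd ζ hζ R hR mbar hmbar ξ hξ
end
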